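/- arXiv:2011.15071 — 5 statements merged into one kernel-verified Lean document; each statement's English description precedes it below -/
import Mathlib

section
/- Let (X, μ) be a finite nonatomic measure space and f ∈ L¹(X, μ). Then for every real t with 0 ≤ t ≤ μ(X), there exists a measurable set E ⊆ X with μ(E) = t such that for every measurable set F ⊆ X with μ(F) = t, ∫_F f dμ ≤ ∫_E f dμ. -/
/-!
The maximiser is a superlevel set of `f` topped up inside a level set. With `c = f*(t)`, one has
`μ {f > c} ≤ t ≤ μ {f ≥ c}`, and since a nonatomic measure takes every intermediate value on
subsets (Sierpiński), there is `E` with `{f > c} ⊆ E ⊆ {f ≥ c}` and `μ E = t`. Any other `F`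
with `μ F = t` exchanges the part `E \ F`, where `f ≥ c`, for the part `F \ E` of the same
measure, where `f ≤ c`.

Sierpiński's theorem is proved greedily: enlarge a set of measure `≤ r` step by step, each time
capturing at least half of the largest admissible addition. If the limit fell short of `r`, a
small set outside it could have been added at every step, yet the increments tend to `0`.
-/

open MeasureTheory Set

noncomputable section

/-- Decreasing rearrangement of `f` with respect to the measure `μ`:
`f*(s) = inf {c : μ {f > c} ≤ s}`. -/
def decRearr {X : Type*} [MeasurableSpace X] (μ : Measure X) (f : X → ℝ) (s : ℝ) : ℝ :=
  sInf {c : ℝ | μ {x | c < f x} ≤ ENNReal.ofReal s}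

/-- A measure is nonatomic if every set of positive measure has a measurable subset of
strictly smaller positive measure. -/
def IsNonatomic {X : Type*} [MeasurableSpace X] (μ : Measure X) : Prop :=
  ∀ s : Set X, MeasurableSet s → μ s ≠ 0 →
    ∃ t, t ⊆ s ∧ MeasurableSet t ∧ 0 < μ t ∧ μ t < μ s

open Filter Topology
open scoped ENNReal

section

variable {X : Type*} [MeasurableSpace X] {μ : Measure X}

theorem tendsto_measure_succ_sdiff_zero [IsFiniteMeasure μ] {s : ℕ → Set X}
    (hs : ∀ n, MeasurableSet (s n)) (hmono : Monotone s) :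
    Tendsto (fun n ↦ μ (s (n + 1) \ s n)) atTop (𝓝 0) := by
  have hsum : ∑' n, μ (disjointed s n) ≠ ∞ := by
    rw [← measure_iUnion (disjoint_disjointed s) (MeasurableSet.disjointed hs)]
    exact measure_ne_top _ _
  have := (tendsto_add_atTop_iff_nat 1).2 (ENNReal.tendsto_atTop_zero_of_tsum_ne_top hsum)
  simpa only [← Order.succ_eq_add_one, hmono.disjointed_succ (not_isMax _)] using this

theorem exists_greedy_superset [IsFiniteMeasure μ] {r : ℝ≥0∞} {t : Set X}
    (ht : MeasurableSet t) (htr : μ t ≤ r) :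
    ∃ t', MeasurableSet t' ∧ μ t' ≤ r ∧ t ⊆ t' ∧
      ∀ u, MeasurableSet u → Disjoint t u → μ t + μ u ≤ r → μ u ≤ 2 * μ (t' \ t) := by
  set gaps := {m | ∃ u, MeasurableSet u ∧ Disjoint t u ∧ μ t + μ u ≤ r ∧ μ u = m}
  have hle_sup : ∀ u, MeasurableSet u → Disjoint t u → μ t + μ u ≤ r → μ u ≤ sSup gaps :=
    fun u hu hd hr ↦ le_sSup ⟨u, hu, hd, hr, rfl⟩
  obtain ⟨u₀, hu₀, hd₀, hr₀, hsup⟩ : ∃ u₀, MeasurableSet u₀ ∧ Disjoint t u₀ ∧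
      μ t + μ u₀ ≤ r ∧ sSup gaps ≤ 2 * μ u₀ := by
    rcases eq_or_ne (sSup gaps) 0 with h | h
    · exact ⟨∅, .empty, disjoint_empty _, by simpa using htr, by simp [h]⟩
    have hfin : sSup gaps ≠ ∞ :=
      ne_top_of_le_ne_top (measure_ne_top μ univ) (sSup_le fun _ ⟨u, _, _, _, hu⟩ ↦
        hu ▸ measure_mono (subset_univ u))
    obtain ⟨_, ⟨u₀, hu₀, hd₀, hr₀, rfl⟩, hlt⟩ := lt_sSup_iff.1 (ENNReal.half_lt_self h hfin)
    exact ⟨u₀, hu₀, hd₀, hr₀, (ENNReal.div_le_iff_le_mul (by simp) (by simp)).1 hlt.le |>.trans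
      (by rw [mul_comm])⟩
  refine ⟨t ∪ u₀, ht.union hu₀, (measure_union_le _ _).trans hr₀, subset_union_left,
    fun u hu hd hr ↦ ?_⟩
  rw [union_sdiff_left, hd₀.sdiff_eq_right]
  exact (hle_sup u hu hd hr).trans hsup

namespace IsNonatomic

theorem restrict (hna : IsNonatomic μ) {s : Set X} (hs : MeasurableSet s) :
    IsNonatomic (μ.restrict s) := by
  intro a ha h0
  rw [Measure.restrict_apply ha] at h0 ⊢
  obtain ⟨b, hb, hbm, hb0, hblt⟩ := hna (a ∩ s) (ha.inter hs) h0
  have hbs : b ∩ s = b := inter_eq_left.2 (hb.trans inter_subset_right)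
  exact ⟨b, hb.trans inter_subset_left, hbm, by rwa [Measure.restrict_apply hbm, hbs],
    by rwa [Measure.restrict_apply hbm, hbs]⟩

theorem exists_subset_measure_le_half [IsFiniteMeasure μ] (hna : IsNonatomic μ) {s : Set X}
    (hs : MeasurableSet s) (h0 : μ s ≠ 0) :
    ∃ t ⊆ s, MeasurableSet t ∧ 0 < μ t ∧ μ t ≤ μ s / 2 := by
  obtain ⟨t, hts, ht, ht0, hlt⟩ := hna s hs h0
  rcases le_or_gt (μ t) (μ s / 2) with hle | hgt
  · exact ⟨t, hts, ht, ht0, hle⟩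
  have hdiff : μ (s \ t) = μ s - μ t := measure_sdiff hts ht.nullMeasurableSet (measure_ne_top μ t)
  refine ⟨s \ t, sdiff_subset, hs.diff ht, hdiff ▸ tsub_pos_of_lt hlt, ?_⟩
  rw [hdiff, tsub_le_iff_right]
  calc μ s = μ s / 2 + μ s / 2 := (ENNReal.add_halves _).symm
    _ ≤ μ s / 2 + μ t := by gcongr

theorem exists_subset_measure_pos_le [IsFiniteMeasure μ] (hna : IsNonatomic μ) {s : Set X}
    (hs : MeasurableSet s) (h0 : μ s ≠ 0) {ε : ℝ≥0∞} (hε : 0 < ε) :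
    ∃ t ⊆ s, MeasurableSet t ∧ 0 < μ t ∧ μ t ≤ ε := by
  have halving : ∀ n : ℕ, ∃ t ⊆ s, MeasurableSet t ∧ 0 < μ t ∧ μ t ≤ 2⁻¹ ^ n * μ s := by
    intro n
    induction n with
    | zero => exact ⟨s, subset_rfl, hs, pos_iff_ne_zero.2 h0, by simp⟩
    | succ n ih =>
      obtain ⟨t, hts, ht, ht0, htn⟩ := ih
      obtain ⟨u, hut, hu, hu0, hut2⟩ := hna.exists_subset_measure_le_half ht ht0.ne'
      refine ⟨u, hut.trans hts, hu, hu0, ?_⟩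
      calc μ u ≤ 2⁻¹ * μ t := by rwa [← ENNReal.div_eq_inv_mul]
        _ ≤ 2⁻¹ * (2⁻¹ ^ n * μ s) := by gcongr
        _ = 2⁻¹ ^ (n + 1) * μ s := by rw [pow_succ', mul_assoc]
  have hlim : Tendsto (fun n : ℕ ↦ 2⁻¹ ^ n * μ s) atTop (𝓝 0) := by
    simpa using ENNReal.Tendsto.mul_const
      (ENNReal.tendsto_pow_atTop_nhds_zero_of_lt_one (by norm_num)) (Or.inr (measure_ne_top μ s))
  obtain ⟨n, hn⟩ := (hlim.eventually (gt_mem_nhds hε)).exists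
  obtain ⟨t, hts, ht, ht0, htn⟩ := halving n
  exact ⟨t, hts, ht, ht0, htn.trans hn.le⟩

/-- **Sierpiński's theorem**. -/
theorem exists_measure_eq [IsFiniteMeasure μ] (hna : IsNonatomic μ) {r : ℝ≥0∞}
    (hr : r ≤ μ univ) : ∃ t, MeasurableSet t ∧ μ t = r := by
  choose! next hnext hnext_le hsub_next hgap using
    fun t (ht : MeasurableSet t) (htr : μ t ≤ r) ↦ exists_greedy_superset (μ := μ) ht htr
  set seq : ℕ → Set X := fun n ↦ next^[n] ∅
  have hseq_succ : ∀ n, seq (n + 1) = next (seq n) := fun n ↦ Function.iterate_succ_apply' _ _ _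
  have hgood : ∀ n, MeasurableSet (seq n) ∧ μ (seq n) ≤ r := by
    intro n
    induction n with
    | zero => simp [seq]
    | succ n ih => rw [hseq_succ]; exact ⟨hnext _ ih.1 ih.2, hnext_le _ ih.1 ih.2⟩
  have hmono : Monotone seq := monotone_nat_of_le_succ fun n ↦ by
    rw [hseq_succ]; exact hsub_next _ (hgood n).1 (hgood n).2
  have hT : MeasurableSet (⋃ n, seq n) := .iUnion fun n ↦ (hgood n).1
  have hTr : μ (⋃ n, seq n) ≤ r := by
    rw [hmono.measure_iUnion]; exact iSup_le fun n ↦ (hgood n).2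
  refine ⟨⋃ n, seq n, hT, hTr.antisymm (not_lt.1 fun hlt ↦ ?_)⟩
  have hcompl : μ (⋃ n, seq n)ᶜ ≠ 0 := by
    rw [measure_compl hT (measure_ne_top _ _)]
    exact (tsub_pos_of_lt (hlt.trans_le hr)).ne'
  obtain ⟨u, huT, hu, hu0, hur⟩ := hna.exists_subset_measure_pos_le hT.compl hcompl
    (tsub_pos_of_lt hlt)
  have hgap_u : ∀ n, μ u ≤ 2 * μ (seq (n + 1) \ seq n) := fun n ↦ by
    rw [hseq_succ]
    refine hgap _ (hgood n).1 (hgood n).2 u hu ?_ ?_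
    · exact disjoint_compl_right.mono_right (huT.trans (compl_subset_compl.2 (subset_iUnion _ n)))
    · calc μ (seq n) + μ u ≤ μ (⋃ n, seq n) + (r - μ (⋃ n, seq n)) :=
            add_le_add (measure_mono (subset_iUnion _ n)) hur
        _ = r := add_tsub_cancel_of_le hlt.le
  have hlim : Tendsto (fun n ↦ 2 * μ (seq (n + 1) \ seq n)) atTop (𝓝 0) := by
    simpa using ENNReal.Tendsto.const_mul (tendsto_measure_succ_sdiff_zero (μ := μ)
      (fun n ↦ (hgood n).1) hmono) (Or.inr (ENNReal.ofNat_ne_top (n := 2)))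
  exact hu0.ne' (le_zero_iff.1 (ge_of_tendsto' hlim hgap_u))

theorem exists_between_measure_eq [IsFiniteMeasure μ] (hna : IsNonatomic μ) {a b : Set X}
    (ha : MeasurableSet a) (hb : MeasurableSet b) (hab : a ⊆ b) {r : ℝ≥0∞} (har : μ a ≤ r)
    (hrb : r ≤ μ b) : ∃ E, MeasurableSet E ∧ a ⊆ E ∧ E ⊆ b ∧ μ E = r := by
  have hgap : r - μ a ≤ μ.restrict (b \ a) univ := by
    rw [Measure.restrict_apply_univ, measure_sdiff hab ha.nullMeasurableSet (measure_ne_top μ a)]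
    exact tsub_le_tsub_right hrb _
  obtain ⟨S, hS, hSr⟩ := (hna.restrict (hb.diff ha)).exists_measure_eq hgap
  rw [Measure.restrict_apply hS] at hSr
  refine ⟨a ∪ S ∩ (b \ a), ha.union (hS.inter (hb.diff ha)), subset_union_left,
    union_subset hab (inter_subset_right.trans sdiff_subset), ?_⟩
  rw [measure_union (disjoint_sdiff_right.mono_right inter_subset_right) (hS.inter (hb.diff ha)),
    hSr, add_tsub_cancel_of_le har]

end IsNonatomic

section Rearrangement

variable {g : X → ℝ} {t : ℝ}

theorem measure_decRearr_lt_le (hne : {c : ℝ | μ {x | c < g x} ≤ ENNReal.ofReal t}.Nonempty) :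
    μ {x | decRearr μ g t < g x} ≤ ENNReal.ofReal t := by
  obtain ⟨u, hu_anti, hu_gt, hu_lim⟩ := exists_seq_strictAnti_tendsto (decRearr μ g t)
  have hunion : {x | decRearr μ g t < g x} = ⋃ n, {x | u n < g x} := by
    ext x
    simp only [mem_ofPred_eq, mem_iUnion]
    exact ⟨fun h ↦ (hu_lim.eventually (gt_mem_nhds h)).exists, fun ⟨n, hn⟩ ↦ (hu_gt n).trans hn⟩
  have hmono : Monotone fun n ↦ {x | u n < g x} := fun _ _ h _ hx ↦
    (hu_anti.antitone h).trans_lt hx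
  rw [hunion, hmono.measure_iUnion]
  refine iSup_le fun n ↦ ?_
  obtain ⟨c, hc, hcu⟩ := exists_lt_of_csInf_lt hne (hu_gt n)
  exact (measure_mono fun x hx ↦ hcu.trans hx).trans hc

theorem bddBelow_decRearr_set (ht : ENNReal.ofReal t < μ univ) :
    BddBelow {c : ℝ | μ {x | c < g x} ≤ ENNReal.ofReal t} := by
  have hlim : Tendsto (fun c : ℝ ↦ μ {x | c < g x}) atBot (𝓝 (μ univ)) := by
    have := tendsto_measure_iUnion_atBot (μ := μ) (s := fun c : ℝ ↦ {x | c < g x})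
      (fun _ _ h _ hx ↦ h.trans_lt hx)
    rwa [iUnion_eq_univ_iff.2 fun x ↦ ⟨g x - 1, show g x - 1 < g x from sub_one_lt _⟩] at this
  obtain ⟨c₀, hc₀⟩ := eventually_atBot.1 (hlim.eventually (lt_mem_nhds ht))
  exact ⟨c₀, fun c hc ↦ le_of_not_gt fun hlt ↦ (hc₀ c hlt.le).not_ge hc⟩

variable [IsFiniteMeasure μ]

theorem nonempty_decRearr_set (hg : Measurable g) (ht : 0 < ENNReal.ofReal t) :
    {c : ℝ | μ {x | c < g x} ≤ ENNReal.ofReal t}.Nonempty := by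
  have hlim : Tendsto (fun c : ℝ ↦ μ {x | c < g x}) atTop (𝓝 0) := by
    have := tendsto_measure_iInter_atTop (μ := μ) (s := fun c : ℝ ↦ {x | c < g x})
      (fun _ ↦ (measurableSet_lt measurable_const hg).nullMeasurableSet)
      (fun _ _ h _ hx ↦ h.trans_lt hx) ⟨0, measure_ne_top _ _⟩
    rwa [iInter_eq_empty_iff.2 fun x ↦ ⟨g x, fun h ↦ lt_irrefl (g x) h⟩, measure_empty] at this
  exact (hlim.eventually (gt_mem_nhds ht)).exists.imp fun _ ↦ le_of_lt

theorem le_measure_decRearr_le (hg : Measurable g)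
    (hbdd : BddBelow {c : ℝ | μ {x | c < g x} ≤ ENNReal.ofReal t}) :
    ENNReal.ofReal t ≤ μ {x | decRearr μ g t ≤ g x} := by
  obtain ⟨u, hu_mono, hu_lt, hu_lim⟩ := exists_seq_strictMono_tendsto (decRearr μ g t)
  have hinter : {x | decRearr μ g t ≤ g x} = ⋂ n, {x | u n < g x} := by
    ext x
    simp only [mem_ofPred_eq, mem_iInter]
    exact ⟨fun h n ↦ (hu_lt n).trans_le h, fun h ↦ le_of_tendsto' hu_lim fun n ↦ (h n).le⟩
  have hanti : Antitone fun n ↦ {x | u n < g x} := fun _ _ h _ hx ↦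
    (hu_mono.monotone h).trans_lt hx
  rw [hinter, hanti.measure_iInter
    (fun _ ↦ (measurableSet_lt measurable_const hg).nullMeasurableSet) ⟨0, measure_ne_top _ _⟩]
  exact le_iInf fun n ↦ le_of_not_ge fun h ↦ (hu_lt n).not_ge (csInf_le hbdd h)

theorem IsNonatomic.exists_measure_eq_superlevel (hna : IsNonatomic μ) (hg : Measurable g)
    (ht0 : 0 < ENNReal.ofReal t) (ht : ENNReal.ofReal t < μ univ) :
    ∃ E, MeasurableSet E ∧ μ E = ENNReal.ofReal t ∧
      (∀ x ∈ E, decRearr μ g t ≤ g x) ∧ ∀ x ∉ E, g x ≤ decRearr μ g t := by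
  obtain ⟨E, hE, hltE, hEle, hμE⟩ := hna.exists_between_measure_eq
    (measurableSet_lt measurable_const hg) (measurableSet_le measurable_const hg)
    (fun x (hx : decRearr μ g t < g x) ↦ hx.le)
    (measure_decRearr_lt_le (nonempty_decRearr_set hg ht0))
    (le_measure_decRearr_le hg (bddBelow_decRearr_set ht))
  exact ⟨E, hE, hμE, fun _ hx ↦ hEle hx, fun _ hx ↦ not_lt.1 fun h ↦ hx (hltE h)⟩

end Rearrangement

theorem setIntegral_le_of_measure_eq [IsFiniteMeasure μ] {g : X → ℝ} (hg : Integrable g μ)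
    {E F : Set X} (hE : MeasurableSet E) (hF : MeasurableSet F) (hμ : μ F = μ E) {c : ℝ}
    (hcE : ∀ x ∈ E, c ≤ g x) (hcEc : ∀ x ∉ E, g x ≤ c) :
    ∫ x in F, g x ∂μ ≤ ∫ x in E, g x ∂μ := by
  have hgc : Integrable (fun x ↦ g x - c) μ := hg.sub (integrable_const c)
  have key : ∫ x in F, (g x - c) ∂μ ≤ ∫ x in E, (g x - c) ∂μ :=
    calc ∫ x in F, (g x - c) ∂μ
        = ∫ x in F ∩ E, (g x - c) ∂μ + ∫ x in F \ E, (g x - c) ∂μ :=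
          (integral_inter_add_sdiff hE hgc.integrableOn).symm
      _ ≤ ∫ x in F ∩ E, (g x - c) ∂μ :=
          add_le_of_nonpos_right (setIntegral_nonpos (hF.diff hE) fun x hx ↦
            sub_nonpos.2 (hcEc x hx.2))
      _ ≤ ∫ x in E, (g x - c) ∂μ :=
          setIntegral_mono_set hgc.integrableOn
            ((ae_restrict_iff' hE).2 (ae_of_all _ fun x hx ↦ sub_nonneg.2 (hcE x hx)))
            inter_subset_right.eventuallyLE
  rwa [integral_sub hg.integrableOn (integrable_const c),
    integral_sub hg.integrableOn (integrable_const c), setIntegral_const, setIntegral_const,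
    measureReal_def, measureReal_def, hμ, sub_le_sub_iff_right] at key

theorem IsNonatomic.exists_measure_eq_forall_setIntegral_le [IsFiniteMeasure μ]
    (hna : IsNonatomic μ) {g : X → ℝ} (hg : Measurable g) (hgi : Integrable g μ) {t : ℝ}
    (ht : ENNReal.ofReal t ≤ μ univ) :
    ∃ E, MeasurableSet E ∧ μ E = ENNReal.ofReal t ∧
      ∀ F, MeasurableSet F → μ F = ENNReal.ofReal t → ∫ x in F, g x ∂μ ≤ ∫ x in E, g x ∂μ := by
  rcases eq_zero_or_pos (ENNReal.ofReal t) with h0 | h0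
  · refine ⟨∅, .empty, by simp [h0], fun F _ hF ↦ ?_⟩
    rw [setIntegral_measure_zero _ (hF.trans h0), setIntegral_empty]
  rcases ht.eq_or_lt with hT | hT
  · refine ⟨univ, .univ, hT.symm, fun F hF hFμ ↦ (setIntegral_congr_set ?_).le⟩
    exact (ae_eq_univ_iff_measure_eq hF.nullMeasurableSet).2 (hFμ.trans hT)
  obtain ⟨E, hE, hμE, hcE, hcEc⟩ := hna.exists_measure_eq_superlevel hg h0 hT
  exact ⟨E, hE, hμE, fun F hF hFμ ↦
    setIntegral_le_of_measure_eq hgi hE hF (hFμ.trans hμE.symm) hcE hcEc⟩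

end

/-- On a finite nonatomic measure space, the supremum defining the star function is
attained: there is a set of measure `t` maximizing `∫_E f dμ` among sets of measure `t`. -/
theorem star_function_sup_attained {X : Type*} [MeasurableSpace X] (μ : Measure X)
    [IsFiniteMeasure μ] (hna : IsNonatomic μ) (f : X → ℝ) (hf : Integrable f μ) :
    ∀ t : ℝ, 0 ≤ t → t ≤ (μ univ).toReal →
      ∃ E : Set X, MeasurableSet E ∧ μ E = ENNReal.ofReal t ∧
        ∀ F : Set X, MeasurableSet F → μ F = ENNReal.ofReal t →
          ∫ x in F, f x ∂μ ≤ ∫ x in E, f x ∂μ := by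
  intro t _ ht
  obtain ⟨g, hg, hfg⟩ := hf.aemeasurable
  have hint : ∀ s, ∫ x in s, f x ∂μ = ∫ x in s, g x ∂μ := fun _ ↦
    integral_congr_ae (ae_restrict_of_ae hfg)
  simp only [hint]
  exact hna.exists_measure_eq_forall_setIntegral_le hg (hf.congr hfg)
    (ENNReal.ofReal_le_of_le_toReal ht)
end
end

section
/- Let (X, μ) be a finite nonatomic measure space and f ∈ L¹(X, μ). Then for every real t with 0 ≤ t ≤ μ(X), sup{∫_E f dμ : E ⊆ X measurable, μ(E) = t} = ∫₀ᵗ f*(s) ds, where f* is the decreasing rearrangement of f. -/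
/-!
For `0 < t < μ X` write `c = f*(t)`. For every measurable `E` with `μ E = t`,
`∫_E f = ∫_E (f - c) + c t ≤ ∫_X (f - c)⁺ + c t`, with equality as soon as
`{f > c} ⊆ E ⊆ {f ≥ c}`. Since `μ {f > c} ≤ t ≤ μ {f ≥ c}`, nonatomicity (Sierpiński's theorem
that a nonatomic measure takes every intermediate value on subsets) yields such an `E`, so the
supremum is `∫_X (f - c)⁺ + c t`. On the other side `f*` is equimeasurable with `f`: the
pushforwards of `μ` by `f` and of Lebesgue measure on `(0, μ X)` by `f*` coincide, because
`{s | a < f*(s)} = (0, μ {f > a})`. Applying the same identity to `f*` and `E = (0, t]` gives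
`∫₀ᵗ f* = ∫ (f* - c)⁺ + c t = ∫_X (f - c)⁺ + c t`.
-/

open MeasureTheory Set

noncomputable section

open Filter
open scoped ENNReal Topology

section Greedy

variable {X : Type*} [MeasurableSpace X] {μ : Measure X} {A : Set X} {r : ℝ≥0∞}

theorem exists_greedy_extension {B : Set X} (hBA : B ⊆ A) (hB : MeasurableSet B)
    (hBr : μ B ≤ r) (hr : r ≠ ∞) :
    ∃ B', B ⊆ B' ∧ B' ⊆ A ∧ MeasurableSet B' ∧ μ B' ≤ r ∧
      ∀ C ⊆ A \ B, MeasurableSet C → μ B + μ C ≤ r → μ B + μ C / 2 ≤ μ B' := by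
  set δ := ⨆ (C : Set X) (_ : C ⊆ A \ B ∧ MeasurableSet C ∧ μ B + μ C ≤ r), μ C
  have hδ : δ ≠ ∞ := ne_top_of_le_ne_top hr <| iSup₂_le fun C hC => le_add_self.trans hC.2.2
  obtain ⟨C₀, ⟨hC₀A, hC₀, hC₀r⟩, hC₀δ⟩ :
      ∃ C₀, (C₀ ⊆ A \ B ∧ MeasurableSet C₀ ∧ μ B + μ C₀ ≤ r) ∧ δ / 2 ≤ μ C₀ := by
    rcases eq_or_ne δ 0 with h0 | h0
    · exact ⟨∅, ⟨empty_subset _, .empty, by simpa using hBr⟩, by simp [h0]⟩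
    · obtain ⟨C, hC, hlt⟩ := lt_biSup_iff.mp (ENNReal.half_lt_self h0 hδ)
      exact ⟨C, hC, hlt.le⟩
  have hunion : μ (B ∪ C₀) = μ B + μ C₀ :=
    measure_union (disjoint_sdiff_right.mono_right hC₀A) hC₀
  refine ⟨B ∪ C₀, subset_union_left, union_subset hBA (hC₀A.trans sdiff_subset),
    hB.union hC₀, hunion ▸ hC₀r, fun C hCA hC hCr => ?_⟩
  calc μ B + μ C / 2 ≤ μ B + δ / 2 := by gcongr; exact le_biSup (fun C => μ C) ⟨hCA, hC, hCr⟩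
    _ ≤ μ (B ∪ C₀) := hunion ▸ by gcongr

theorem exists_greedy_seq (hr : r ≠ ∞) :
    ∃ B : ℕ → Set X, Monotone B ∧ (∀ n, B n ⊆ A ∧ MeasurableSet (B n) ∧ μ (B n) ≤ r) ∧
      ∀ n, ∀ C ⊆ A \ B n, MeasurableSet C → μ (B n) + μ C ≤ r →
        μ (B n) + μ C / 2 ≤ μ (B (n + 1)) := by
  let T := {B : Set X // B ⊆ A ∧ MeasurableSet B ∧ μ B ≤ r}
  have step : ∀ B : T, ∃ B' : T, B.1 ⊆ B'.1 ∧ ∀ C ⊆ A \ B.1, MeasurableSet C →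
      μ B.1 + μ C ≤ r → μ B.1 + μ C / 2 ≤ μ B'.1 := by
    rintro ⟨B, hBA, hB, hBr⟩
    obtain ⟨B', hBB', hB'A, hB', hB'r, hgrow⟩ := exists_greedy_extension hBA hB hBr hr
    exact ⟨⟨B', hB'A, hB', hB'r⟩, hBB', hgrow⟩
  choose F hFmono hFgrow using step
  let seq : ℕ → T := fun n => F^[n] ⟨∅, empty_subset _, .empty, by simp⟩
  have hsucc : ∀ n, seq (n + 1) = F (seq n) := fun n => Function.iterate_succ_apply' _ _ _
  refine ⟨fun n => (seq n).1, monotone_nat_of_le_succ fun n => ?_, fun n => (seq n).2,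
    fun n => ?_⟩
  · rw [hsucc]; exact hFmono _
  · dsimp only; rw [hsucc]; exact hFgrow _

end Greedy

namespace IsNonatomic

variable {X : Type*} [MeasurableSpace X] {μ : Measure X} [IsFiniteMeasure μ] {A : Set X}

theorem exists_subset_measure_pos_le_half (hμ : IsNonatomic μ) (hA : MeasurableSet A)
    (hA0 : μ A ≠ 0) : ∃ B ⊆ A, MeasurableSet B ∧ 0 < μ B ∧ μ B ≤ μ A / 2 := by
  obtain ⟨B, hBA, hB, hB0, hBA'⟩ := hμ A hA hA0
  rcases le_or_gt (μ B) (μ A / 2) with h | h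
  · exact ⟨B, hBA, hB, hB0, h⟩
  have hdiff : μ (A \ B) = μ A - μ B :=
    measure_sdiff hBA hB.nullMeasurableSet (measure_ne_top μ B)
  refine ⟨A \ B, sdiff_subset, hA.diff hB, hdiff ▸ tsub_pos_of_lt hBA', ?_⟩
  rw [hdiff, tsub_le_iff_right]
  calc μ A = μ A / 2 + μ A / 2 := (ENNReal.add_halves _).symm
    _ ≤ μ A / 2 + μ B := by gcongr

theorem exists_subset_measure_pos_le_s12 (hμ : IsNonatomic μ) (hA : MeasurableSet A)
    (hA0 : μ A ≠ 0) {ε : ℝ≥0∞} (hε : ε ≠ 0) :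
    ∃ B ⊆ A, MeasurableSet B ∧ 0 < μ B ∧ μ B ≤ ε := by
  have halving : ∀ n : ℕ, ∃ B ⊆ A, MeasurableSet B ∧ 0 < μ B ∧ μ B ≤ μ A * 2⁻¹ ^ n := by
    intro n
    induction n with
    | zero => exact ⟨A, subset_rfl, hA, pos_iff_ne_zero.2 hA0, by simp⟩
    | succ n ih =>
      obtain ⟨B, hBA, hB, hB0, hBle⟩ := ih
      obtain ⟨C, hCB, hC, hC0, hCle⟩ := hμ.exists_subset_measure_pos_le_half hB hB0.ne'
      refine ⟨C, hCB.trans hBA, hC, hC0, hCle.trans ?_⟩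
      rw [pow_succ, ← mul_assoc, ← div_eq_mul_inv]
      gcongr
  have hlim : Tendsto (fun n : ℕ => μ A * 2⁻¹ ^ n) atTop (𝓝 0) := by
    simpa using ENNReal.Tendsto.const_mul (ENNReal.tendsto_pow_atTop_nhds_zero_of_lt_one
      (by norm_num)) (.inr (measure_ne_top μ A))
  obtain ⟨n, hn⟩ := (hlim.eventually_lt_const (pos_iff_ne_zero.2 hε)).exists
  obtain ⟨B, hBA, hB, hB0, hBle⟩ := halving n
  exact ⟨B, hBA, hB, hB0, hBle.trans hn.le⟩

theorem exists_subset_measure_eq (hμ : IsNonatomic μ) (hA : MeasurableSet A) {r : ℝ≥0∞}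
    (hr : r ≤ μ A) : ∃ B ⊆ A, MeasurableSet B ∧ μ B = r := by
  have hr_top : r ≠ ∞ := ne_top_of_le_ne_top (measure_ne_top μ A) hr
  obtain ⟨B, hBmono, hB, hgrow⟩ := exists_greedy_seq (μ := μ) (A := A) hr_top
  have hU : MeasurableSet (⋃ n, B n) := .iUnion fun n => (hB n).2.1
  have hUr : μ (⋃ n, B n) ≤ r := by
    rw [hBmono.measure_iUnion]; exact iSup_le fun n => (hB n).2.2
  refine ⟨⋃ n, B n, iUnion_subset fun n => (hB n).1, hU, hUr.antisymm ?_⟩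
  by_contra! hlt
  have hrest : μ (A \ ⋃ n, B n) ≠ 0 :=
    ((tsub_pos_of_lt (hlt.trans_le hr)).trans_le le_measure_sdiff).ne'
  obtain ⟨C, hCA, hC, hC0, hCle⟩ :=
    hμ.exists_subset_measure_pos_le_s12 (hA.diff hU) hrest (tsub_pos_of_lt hlt).ne'
  -- `C` stays admissible at every stage, so each greedy step gains at least `μ C / 2`
  have hstep : ∀ n, μ (B n) + μ C / 2 ≤ μ (B (n + 1)) := fun n =>
    hgrow n C (hCA.trans (sdiff_subset_sdiff_right (subset_iUnion B n))) hC <|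
      calc μ (B n) + μ C ≤ μ (⋃ n, B n) + (r - μ (⋃ n, B n)) :=
            add_le_add (measure_mono (subset_iUnion B n)) hCle
        _ = r := add_tsub_cancel_of_le hUr
  have hlin : ∀ n : ℕ, n * (μ C / 2) ≤ μ (B n) := by
    intro n
    induction n with
    | zero => simp
    | succ n ih =>
      calc ((n + 1 : ℕ) : ℝ≥0∞) * (μ C / 2) = n * (μ C / 2) + μ C / 2 := by push_cast; ring
        _ ≤ μ (B (n + 1)) := (add_le_add_left ih _).trans (hstep n)
  obtain ⟨n, hn⟩ := ENNReal.exists_nat_mul_gt (ENNReal.half_pos hC0.ne').ne' hr_top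
  exact (hn.trans_le ((hlin n).trans (hB n).2.2)).false

end IsNonatomic

theorem MeasureTheory.Measure.ext_of_Ioi_of_measure_univ {α : Type*} [TopologicalSpace α]
    {m : MeasurableSpace α} [SecondCountableTopology α] [LinearOrder α] [OrderTopology α]
    [BorelSpace α] {μ ν : Measure α} [IsFiniteMeasure μ] (huniv : μ univ = ν univ)
    (h : ∀ a, μ (Ioi a) = ν (Ioi a)) : μ = ν := by
  have : IsFiniteMeasure ν := ⟨huniv ▸ measure_lt_top μ univ⟩
  refine Measure.ext_of_Iic μ ν fun a => ?_
  rw [← compl_Ioi, measure_compl measurableSet_Ioi (measure_ne_top _ _),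
    measure_compl measurableSet_Ioi (measure_ne_top _ _), huniv, h]

section Distribution

variable {X : Type*} [MeasurableSpace X] {μ : Measure X} {g : X → ℝ} {a s : ℝ} {m : ℝ≥0∞}

theorem measure_lt_le_of_forall_gt (h : ∀ b, a < b → μ {x | b < g x} ≤ m) :
    μ {x | a < g x} ≤ m := by
  obtain ⟨u, hu_anti, hu_gt, hu_lim⟩ := exists_seq_strictAnti_tendsto a
  have hU : {x | a < g x} = ⋃ n, {x | u n < g x} := by
    ext x
    simp only [mem_ofPred_eq, mem_iUnion]
    exact ⟨fun hx => (hu_lim.eventually (gt_mem_nhds hx)).exists,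
      fun ⟨n, hn⟩ => (hu_gt n).trans hn⟩
  have hmono : Monotone fun n => {x | u n < g x} :=
    fun i j hij x hx => (hu_anti.antitone hij).trans_lt hx
  rw [hU, hmono.measure_iUnion]
  exact iSup_le fun n => h _ (hu_gt n)

theorem le_measure_le_of_forall_lt [IsFiniteMeasure μ] (hg : Measurable g)
    (h : ∀ b < a, m ≤ μ {x | b < g x}) : m ≤ μ {x | a ≤ g x} := by
  obtain ⟨u, hu_mono, hu_lt, hu_lim⟩ := exists_seq_strictMono_tendsto a
  have hI : {x | a ≤ g x} = ⋂ n, {x | u n < g x} := by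
    ext x
    simp only [mem_ofPred_eq, mem_iInter]
    exact ⟨fun hx n => (hu_lt n).trans_le hx,
      fun hx => le_of_tendsto' hu_lim fun n => (hx n).le⟩
  have hanti : Antitone fun n => {x | u n < g x} :=
    fun i j hij x hx => (hu_mono.monotone hij).trans_lt hx
  rw [hI, hanti.measure_iInter (fun n => (measurableSet_lt measurable_const hg).nullMeasurableSet)
    ⟨0, measure_ne_top _ _⟩]
  exact le_iInf fun n => h _ (hu_lt n)

theorem nonempty_setOf_measure_lt_le [IsFiniteMeasure μ] (hg : Measurable g) (hs : 0 < s) :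
    {c : ℝ | μ {x | c < g x} ≤ ENNReal.ofReal s}.Nonempty := by
  have hempty : ⋂ n : ℕ, {x | (n : ℝ) < g x} = ∅ := by
    ext x
    simpa using exists_nat_ge (g x)
  have hanti : Antitone fun n : ℕ => {x | (n : ℝ) < g x} :=
    fun i j hij x (hx : (j : ℝ) < g x) => (Nat.cast_le.2 hij).trans_lt hx
  have hlim : Tendsto (fun n : ℕ => μ {x | (n : ℝ) < g x}) atTop (𝓝 0) := by
    simpa [hempty, Function.comp_def] using tendsto_measure_iInter_atTop
      (fun n => (measurableSet_lt measurable_const hg).nullMeasurableSet) hanti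
      ⟨0, measure_ne_top μ _⟩
  obtain ⟨n, hn⟩ := (hlim.eventually_lt_const (ENNReal.ofReal_pos.2 hs)).exists
  exact ⟨n, hn.le⟩

theorem bddBelow_setOf_measure_lt_le (hs : ENNReal.ofReal s < μ univ) :
    BddBelow {c : ℝ | μ {x | c < g x} ≤ ENNReal.ofReal s} := by
  have hunion : ⋃ n : ℕ, {x | -(n : ℝ) < g x} = univ := by
    ext x
    simpa [neg_lt] using exists_nat_gt (-g x)
  have hmono : Monotone fun n : ℕ => {x | -(n : ℝ) < g x} :=
    fun i j hij x (hx : -(i : ℝ) < g x) => (neg_le_neg (Nat.cast_le.2 hij)).trans_lt hx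
  have hlim : Tendsto (fun n : ℕ => μ {x | -(n : ℝ) < g x}) atTop (𝓝 (μ univ)) := by
    simpa [hunion, Function.comp_def] using tendsto_measure_iUnion_atTop (μ := μ) hmono
  obtain ⟨n, hn⟩ := (hlim.eventually_const_lt hs).exists
  refine ⟨-n, fun c hc => ?_⟩
  by_contra! hcn
  exact ((measure_mono fun x hx => hcn.trans hx).trans hc).not_gt hn

end Distribution

section DecRearr

variable {X : Type*} [MeasurableSpace X] {μ : Measure X} {f g : X → ℝ} {a s : ℝ}

theorem decRearr_congr_ae (hfg : f =ᵐ[μ] g) : decRearr μ f = decRearr μ g := by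
  have hlevel : ∀ c : ℝ, μ {x | c < f x} = μ {x | c < g x} := fun c =>
    measure_congr (hfg.fun_comp (c < ·))
  ext s
  simp only [decRearr, hlevel]

theorem lt_measure_lt_of_lt_decRearr (hs : ENNReal.ofReal s < μ univ)
    (ha : a < decRearr μ g s) : ENNReal.ofReal s < μ {x | a < g x} := by
  by_contra! h
  exact (csInf_le (bddBelow_setOf_measure_lt_le hs) h).not_gt ha

variable [IsFiniteMeasure μ]

theorem measure_lt_le_of_decRearr_le (hg : Measurable g) (hs : 0 < s)
    (ha : decRearr μ g s ≤ a) : μ {x | a < g x} ≤ ENNReal.ofReal s := by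
  refine measure_lt_le_of_forall_gt fun b hb => ?_
  obtain ⟨c, hc, hcb⟩ :=
    exists_lt_of_csInf_lt (nonempty_setOf_measure_lt_le hg hs) (ha.trans_lt hb)
  exact (measure_mono fun x hx => hcb.trans hx).trans hc

theorem ofReal_lt_measure_univ (hs : s ∈ Ioo 0 (μ univ).toReal) :
    ENNReal.ofReal s < μ univ :=
  (ENNReal.ofReal_lt_iff_lt_toReal hs.1.le (measure_ne_top μ univ)).2 hs.2

theorem decRearr_antitoneOn (hg : Measurable g) :
    AntitoneOn (decRearr μ g) (Ioo 0 (μ univ).toReal) := fun _ hs _ ht hst =>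
  csInf_le_csInf (bddBelow_setOf_measure_lt_le (ofReal_lt_measure_univ ht))
    (nonempty_setOf_measure_lt_le hg hs.1) fun _ hc => hc.trans (ENNReal.ofReal_le_ofReal hst)

theorem lt_decRearr_iff (hg : Measurable g) (hs : s ∈ Ioo 0 (μ univ).toReal) :
    a < decRearr μ g s ↔ s < μ.real {x | a < g x} := by
  rw [measureReal_def, ← ENNReal.ofReal_lt_iff_lt_toReal hs.1.le (measure_ne_top _ _)]
  refine ⟨lt_measure_lt_of_lt_decRearr (ofReal_lt_measure_univ hs), fun h => ?_⟩
  by_contra! ha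
  exact (measure_lt_le_of_decRearr_le hg hs.1 ha).not_gt h

theorem ofReal_le_measure_decRearr_le (hg : Measurable g) (hs : s ∈ Ioo 0 (μ univ).toReal) :
    ENNReal.ofReal s ≤ μ {x | decRearr μ g s ≤ g x} :=
  le_measure_le_of_forall_lt hg fun _ hb =>
    ENNReal.ofReal_le_of_le_toReal ((lt_decRearr_iff hg hs).1 hb).le

theorem aemeasurable_decRearr (hg : Measurable g) :
    AEMeasurable (decRearr μ g) (volume.restrict (Ioo 0 (μ univ).toReal)) :=
  aemeasurable_restrict_of_antitoneOn measurableSet_Ioo (decRearr_antitoneOn hg)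

theorem map_decRearr (hg : Measurable g) :
    (volume.restrict (Ioo 0 (μ univ).toReal)).map (decRearr μ g) = μ.map g := by
  refine Measure.ext_of_Ioi_of_measure_univ ?_ fun a => ?_
  · rw [Measure.map_apply_of_aemeasurable (aemeasurable_decRearr hg) .univ,
      Measure.map_apply hg .univ, preimage_univ, preimage_univ, Measure.restrict_apply_univ,
      Real.volume_Ioo, sub_zero, ENNReal.ofReal_toReal (measure_ne_top μ univ)]
  have hlevel : decRearr μ g ⁻¹' Ioi a ∩ Ioo 0 (μ univ).toReal = Ioo 0 (μ.real {x | a < g x}) := by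
    ext s
    refine ⟨fun ⟨ha, hs⟩ => ⟨hs.1, (lt_decRearr_iff hg hs).1 ha⟩, fun ⟨hs0, hsa⟩ => ?_⟩
    have hs : s ∈ Ioo 0 (μ univ).toReal :=
      ⟨hs0, hsa.trans_le (measureReal_mono (subset_univ _))⟩
    exact ⟨(lt_decRearr_iff hg hs).2 hsa, hs⟩
  rw [Measure.map_apply_of_aemeasurable (aemeasurable_decRearr hg) measurableSet_Ioi,
    Measure.restrict_apply' measurableSet_Ioo, hlevel, Measure.map_apply hg measurableSet_Ioi,
    Real.volume_Ioo, sub_zero, measureReal_def, ENNReal.ofReal_toReal (measure_ne_top _ _)]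
  rfl

theorem integral_comp_decRearr (hg : Measurable g) {φ : ℝ → ℝ} (hφ : Measurable φ) :
    ∫ s in Ioo 0 (μ univ).toReal, φ (decRearr μ g s) = ∫ x, φ (g x) ∂μ := by
  rw [← integral_map (aemeasurable_decRearr hg) hφ.aestronglyMeasurable, map_decRearr hg,
    integral_map hg.aemeasurable hφ.aestronglyMeasurable]

theorem integrableOn_decRearr (hg : Measurable g) (hgi : Integrable g μ) :
    IntegrableOn (decRearr μ g) (Ioo 0 (μ univ).toReal) := by
  have hmap : Integrable id (μ.map g) :=
    (integrable_map_measure aestronglyMeasurable_id hg.aemeasurable).2 hgi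
  rw [← map_decRearr hg] at hmap
  exact (integrable_map_measure aestronglyMeasurable_id (aemeasurable_decRearr hg)).1 hmap

end DecRearr

section Bathtub

variable {X : Type*} [MeasurableSpace X] {μ : Measure X} [IsFiniteMeasure μ] {g : X → ℝ}
  {E : Set X}

theorem setIntegral_eq_setIntegral_sub_add (hg : Integrable g μ) (E : Set X) (c : ℝ) :
    ∫ x in E, g x ∂μ = ∫ x in E, (g x - c) ∂μ + c * μ.real E := by
  rw [integral_sub hg.integrableOn (integrable_const c), setIntegral_const, smul_eq_mul]
  ring

theorem setIntegral_le_integral_max_sub_add (hg : Integrable g μ) (E : Set X) (c : ℝ) :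
    ∫ x in E, g x ∂μ ≤ ∫ x, max (g x - c) 0 ∂μ + c * μ.real E := by
  have hpos : Integrable (fun x => max (g x - c) 0) μ := (hg.sub (integrable_const c)).pos_part
  rw [setIntegral_eq_setIntegral_sub_add hg E c, add_le_add_iff_right]
  calc ∫ x in E, (g x - c) ∂μ ≤ ∫ x in E, max (g x - c) 0 ∂μ :=
        integral_mono (hg.sub (integrable_const c)).integrableOn hpos.integrableOn
          fun x => le_max_left _ _
    _ ≤ ∫ x, max (g x - c) 0 ∂μ :=
        setIntegral_le_integral hpos (.of_forall fun x => le_max_right _ _)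

theorem setIntegral_eq_integral_max_sub_add (hg : Integrable g μ) (hE : MeasurableSet E) {c : ℝ}
    (hgt : ∀ᵐ x ∂μ, c < g x → x ∈ E) (hge : ∀ᵐ x ∂μ, x ∈ E → c ≤ g x) :
    ∫ x in E, g x ∂μ = ∫ x, max (g x - c) 0 ∂μ + c * μ.real E := by
  rw [setIntegral_eq_setIntegral_sub_add hg E c,
    setIntegral_congr_ae hE (hge.mono fun x hx hxE => (max_eq_left (sub_nonneg.2 (hx hxE))).symm),
    setIntegral_eq_integral_of_ae_compl_eq_zero
      (hgt.mono fun x hx hxE => max_eq_right (sub_nonpos.2 (not_lt.1 (mt hx hxE))))]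

end Bathtub

def starFunction {X : Type*} [MeasurableSpace X] (μ : Measure X) (f : X → ℝ) (t : ℝ) : ℝ :=
  sSup {I : ℝ | ∃ E : Set X, MeasurableSet E ∧ μ E = ENNReal.ofReal t ∧ I = ∫ x in E, f x ∂μ}

section StarFunction

variable {X : Type*} [MeasurableSpace X] {μ : Measure X} {f g : X → ℝ} {t : ℝ}

theorem starFunction_congr_ae (hfg : f =ᵐ[μ] g) : starFunction μ f = starFunction μ g := by
  have hint : ∀ E, ∫ x in E, f x ∂μ = ∫ x in E, g x ∂μ :=
    fun E => integral_congr_ae (ae_restrict_of_ae hfg)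
  ext t
  simp only [starFunction, hint]

theorem starFunction_eq_setIntegral_of_forall_le {E₀ : Set X} (hE₀ : MeasurableSet E₀)
    (hμE₀ : μ E₀ = ENNReal.ofReal t)
    (hle : ∀ E, MeasurableSet E → μ E = ENNReal.ofReal t → ∫ x in E, g x ∂μ ≤ ∫ x in E₀, g x ∂μ) :
    starFunction μ g t = ∫ x in E₀, g x ∂μ :=
  IsGreatest.csSup_eq ⟨⟨E₀, hE₀, hμE₀, rfl⟩, by rintro _ ⟨E, hE, hμE, rfl⟩; exact hle E hE hμE⟩

theorem starFunction_zero : starFunction μ g 0 = 0 := by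
  refine (starFunction_eq_setIntegral_of_forall_le .empty (by simp) fun E _ hE => ?_).trans
    (by simp)
  rw [setIntegral_measure_zero _ (hE.trans ENNReal.ofReal_zero)]
  simp

theorem starFunction_measure_univ [IsFiniteMeasure μ] :
    starFunction μ g (μ univ).toReal = ∫ x, g x ∂μ := by
  have hofReal : ENNReal.ofReal (μ univ).toReal = μ univ :=
    ENNReal.ofReal_toReal (measure_ne_top μ univ)
  refine (starFunction_eq_setIntegral_of_forall_le .univ hofReal.symm fun E hE hμE => ?_).trans
    setIntegral_univ
  rw [setIntegral_congr_set ((ae_eq_univ_iff_measure_eq hE.nullMeasurableSet).2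
    (hμE.trans hofReal))]

theorem starFunction_eq_integral_max_sub_add [IsFiniteMeasure μ] (hμ : IsNonatomic μ)
    (hg : Measurable g) (hgi : Integrable g μ) (ht : 0 ≤ t) {c : ℝ}
    (hc_lt : μ {x | c < g x} ≤ ENNReal.ofReal t) (hc_le : ENNReal.ofReal t ≤ μ {x | c ≤ g x}) :
    starFunction μ g t = ∫ x, max (g x - c) 0 ∂μ + c * t := by
  have hlevel : ENNReal.ofReal t - μ {x | c < g x} ≤ μ {x | g x = c} :=
    (tsub_le_tsub_right hc_le _).trans <| le_measure_sdiff.trans <|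
      measure_mono fun x hx => le_antisymm (not_lt.1 hx.2) hx.1
  obtain ⟨A, hAc, hA, hμA⟩ :=
    hμ.exists_subset_measure_eq (measurableSet_eq_fun hg measurable_const) hlevel
  have hdisj : Disjoint {x | c < g x} A :=
    disjoint_left.2 fun x hx hxA => hx.ne' (hAc hxA)
  have hE₀ : MeasurableSet ({x | c < g x} ∪ A) := (measurableSet_lt measurable_const hg).union hA
  have hμE₀ : μ ({x | c < g x} ∪ A) = ENNReal.ofReal t := by
    rw [measure_union hdisj hA, hμA, add_tsub_cancel_of_le hc_lt]
  have hvalue : ∫ x in {x | c < g x} ∪ A, g x ∂μ = ∫ x, max (g x - c) 0 ∂μ + c * t := by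
    rw [setIntegral_eq_integral_max_sub_add hgi hE₀ (.of_forall fun x hx => .inl hx)
      (.of_forall fun x hx => hx.elim (fun h => h.le) fun hxA => (hAc hxA).ge),
      measureReal_def, hμE₀, ENNReal.toReal_ofReal ht]
  refine (starFunction_eq_setIntegral_of_forall_le hE₀ hμE₀ fun E _ hμE => ?_).trans hvalue
  calc ∫ x in E, g x ∂μ ≤ ∫ x, max (g x - c) 0 ∂μ + c * μ.real E :=
        setIntegral_le_integral_max_sub_add hgi E c
    _ = _ := by rw [hvalue, measureReal_def, hμE, ENNReal.toReal_ofReal ht]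

end StarFunction

section IntegralDecRearr

variable {X : Type*} [MeasurableSpace X] {μ : Measure X} [IsFiniteMeasure μ] {g : X → ℝ} {t : ℝ}

theorem intervalIntegral_decRearr_measure_univ (hg : Measurable g) :
    ∫ s in (0 : ℝ)..(μ univ).toReal, decRearr μ g s = ∫ x, g x ∂μ := by
  rw [intervalIntegral.integral_of_le ENNReal.toReal_nonneg, integral_Ioc_eq_integral_Ioo]
  exact integral_comp_decRearr hg measurable_id

theorem intervalIntegral_decRearr_eq_integral_max_sub_add (hg : Measurable g)
    (hgi : Integrable g μ) (ht : t ∈ Ioo 0 (μ univ).toReal) :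
    ∫ s in (0 : ℝ)..t, decRearr μ g s =
      ∫ x, max (g x - decRearr μ g t) 0 ∂μ + decRearr μ g t * t := by
  have hsub : Ioc 0 t ⊆ Ioo 0 (μ univ).toReal := fun s hs => ⟨hs.1, hs.2.trans_lt ht.2⟩
  have hrestrict : ∫ s in Ioc 0 t, decRearr μ g s ∂volume.restrict (Ioo 0 (μ univ).toReal) =
      ∫ s in Ioc 0 t, decRearr μ g s := by
    rw [Measure.restrict_restrict measurableSet_Ioc, inter_eq_left.2 hsub]
  have hgt : ∀ᵐ s ∂volume.restrict (Ioo 0 (μ univ).toReal),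
      decRearr μ g t < decRearr μ g s → s ∈ Ioc 0 t :=
    (ae_restrict_iff' measurableSet_Ioo).2 <| .of_forall fun s hs hlt =>
      ⟨hs.1, not_lt.1 fun hts => (decRearr_antitoneOn hg ht hs hts.le).not_gt hlt⟩
  have hge : ∀ᵐ s ∂volume.restrict (Ioo 0 (μ univ).toReal),
      s ∈ Ioc 0 t → decRearr μ g t ≤ decRearr μ g s :=
    .of_forall fun s hs => decRearr_antitoneOn hg (hsub hs) ht hs.2
  rw [intervalIntegral.integral_of_le ht.1.le, ← hrestrict,
    setIntegral_eq_integral_max_sub_add (integrableOn_decRearr hg hgi) measurableSet_Ioc hgt hge,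
    integral_comp_decRearr hg (φ := fun y => max (y - decRearr μ g t) 0) (by fun_prop),
    measureReal_restrict_apply measurableSet_Ioc, inter_eq_left.2 hsub,
    Real.volume_real_Ioc_of_le ht.1.le, sub_zero]

end IntegralDecRearr

/-- On a finite nonatomic measure space, the star function equals the integral of the
decreasing rearrangement: `sup {∫_E f dμ : μ(E) = t} = ∫₀ᵗ f*(s) ds`. -/
theorem star_function_eq_integral_decRearr {X : Type*} [MeasurableSpace X] (μ : Measure X)
    [IsFiniteMeasure μ] (hna : IsNonatomic μ) (f : X → ℝ) (hf : Integrable f μ) :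
    ∀ t : ℝ, 0 ≤ t → t ≤ (μ univ).toReal →
      sSup {I : ℝ | ∃ E : Set X, MeasurableSet E ∧ μ E = ENNReal.ofReal t ∧
          I = ∫ x in E, f x ∂μ} =
        ∫ s in (0 : ℝ)..t, decRearr μ f s := by
  intro t ht htM
  obtain ⟨g, hg, hfg⟩ : ∃ g, Measurable g ∧ f =ᵐ[μ] g :=
    ⟨_, hf.aemeasurable.measurable_mk, hf.aemeasurable.ae_eq_mk⟩
  have hgi : Integrable g μ := hf.congr hfg
  change starFunction μ f t = _
  rw [starFunction_congr_ae hfg, decRearr_congr_ae hfg]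
  rcases ht.eq_or_lt with rfl | ht0
  · rw [starFunction_zero, intervalIntegral.integral_same]
  rcases htM.eq_or_lt with rfl | htM
  · rw [starFunction_measure_univ, intervalIntegral_decRearr_measure_univ hg]
  have ht' : t ∈ Ioo 0 (μ univ).toReal := ⟨ht0, htM⟩
  rw [intervalIntegral_decRearr_eq_integral_max_sub_add hg hgi ht',
    starFunction_eq_integral_max_sub_add hna hg hgi ht
      (measure_lt_le_of_decRearr_le hg ht0 le_rfl) (ofReal_le_measure_decRearr_le hg ht')]
end
end

section
/- Let (X, μ) be a finite measure space and u, v ∈ L¹(X, μ). Suppose that for every real t with 0 ≤ t ≤ μ(X), ∫₀ᵗ u*(s) ds ≤ ∫₀ᵗ v*(s) ds, where u*, v* are the decreasing rearrangements of u and v. Then for every convex nondecreasing function φ : ℝ → ℝ such that φ∘u and φ∘v are integrable, ∫_X φ(u) dμ ≤ ∫_X φ(v) dμ. -/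
/-!
The rearrangement `u*` pushes Lebesgue measure on `(0, μ X)` forward to the law of `u`, so the
stop-loss integrals `∫ (u - t)⁺ dμ` can be computed on `(0, μ X)`. Since `u* > t` exactly on
`(0, τ)` with `τ = μ {u > t}`, Hardy's argument gives
`∫ (u - t)⁺ = ∫₀^τ (u* - t) ≤ ∫₀^τ (v* - t) ≤ ∫ (v - t)⁺`, and letting `t → -∞` also `∫ u ≤ ∫ v`.
A convex nondecreasing `φ` is the increasing limit of the upper envelopes of its right tangent
lines at finitely many rationals. Each envelope is an affine function of nonnegative slope plus a
nonnegative combination of hinges `(y - c)⁺`, so it satisfies the inequality, and monotone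
convergence passes it to `φ`.
-/

open MeasureTheory Set

noncomputable section

open Filter Topology

lemma tendsto_measure_Ioi_atTop (ν : Measure ℝ) [IsFiniteMeasure ν] :
    Tendsto (fun c => ν (Ioi c)) atTop (𝓝 0) := by
  have h := tendsto_measure_iInter_atTop (μ := ν) (s := Ioi)
    (fun _ => measurableSet_Ioi.nullMeasurableSet) (fun _ _ h => Ioi_subset_Ioi h)
    ⟨0, measure_ne_top ν _⟩
  rwa [show ⋂ c : ℝ, Ioi c = ∅ from iInter_eq_empty_iff.2 fun y => ⟨y, lt_irrefl y⟩,
    measure_empty] at h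

lemma tendsto_measure_Ioi_atBot (ν : Measure ℝ) :
    Tendsto (fun c => ν (Ioi c)) atBot (𝓝 (ν univ)) := by
  have h := tendsto_measure_iUnion_atBot (μ := ν) (s := Ioi) fun _ _ h => Ioi_subset_Ioi h
  rwa [iUnion_Ioi] at h

def upperQuantile (ν : Measure ℝ) (s : ℝ) : ℝ :=
  sInf {c : ℝ | ν (Ioi c) ≤ ENNReal.ofReal s}

lemma decRearr_eq_upperQuantile_map {X : Type*} [MeasurableSpace X] {μ : Measure X} {f : X → ℝ}
    (hf : AEMeasurable f μ) : decRearr μ f = upperQuantile (μ.map f) := by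
  ext s
  simp only [decRearr, upperQuantile, Measure.map_apply_of_aemeasurable hf measurableSet_Ioi]
  rfl

section upperQuantile

variable {ν : Measure ℝ} {s : ℝ}

lemma bddBelow_setOf_measure_Ioi_le (hs : ENNReal.ofReal s < ν univ) :
    BddBelow {c : ℝ | ν (Ioi c) ≤ ENNReal.ofReal s} := by
  obtain ⟨c₀, hc₀⟩ := eventually_atBot.1 ((tendsto_measure_Ioi_atBot ν).eventually_const_lt hs)
  exact ⟨c₀, fun c hc => le_of_not_gt fun hlt => (hc₀ c hlt.le).not_ge hc⟩

variable [IsFiniteMeasure ν]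

lemma nonempty_setOf_measure_Ioi_le (hs : 0 < s) :
    {c : ℝ | ν (Ioi c) ≤ ENNReal.ofReal s}.Nonempty :=
  ((tendsto_measure_Ioi_atTop ν).eventually_lt_const (ENNReal.ofReal_pos.2 hs)).exists.imp
    fun _ => le_of_lt

lemma measure_Ioi_upperQuantile_le (hs₀ : 0 < s) (hs : ENNReal.ofReal s < ν univ) :
    ν (Ioi (upperQuantile ν s)) ≤ ENNReal.ofReal s := by
  obtain ⟨w, hw_anti, hw_lim, hw_mem⟩ :=
    exists_seq_tendsto_sInf (nonempty_setOf_measure_Ioi_le hs₀) (bddBelow_setOf_measure_Ioi_le hs)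
  have hunion : Ioi (upperQuantile ν s) = ⋃ n, Ioi (w n) := by
    ext y
    simp only [mem_Ioi, mem_iUnion]
    refine ⟨fun hy => (hw_lim.eventually (gt_mem_nhds hy)).exists, fun ⟨n, hn⟩ => ?_⟩
    exact (csInf_le (bddBelow_setOf_measure_Ioi_le hs) (hw_mem n)).trans_lt hn
  rw [hunion]
  exact le_of_tendsto' (tendsto_measure_iUnion_atTop fun m n h => Ioi_subset_Ioi (hw_anti h))
    hw_mem

lemma ofReal_lt_measure_univ_of_mem_Ioo (hs : s ∈ Ioo 0 (ν univ).toReal) :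
    ENNReal.ofReal s < ν univ :=
  (ENNReal.ofReal_lt_iff_lt_toReal hs.1.le (measure_ne_top ν _)).2 hs.2

lemma lt_upperQuantile_iff (hs : s ∈ Ioo 0 (ν univ).toReal) (c : ℝ) :
    c < upperQuantile ν s ↔ s < (ν (Ioi c)).toReal := by
  rw [← ENNReal.ofReal_lt_iff_lt_toReal hs.1.le (measure_ne_top ν _)]
  constructor
  · intro hc
    exact lt_of_not_ge fun h =>
      hc.not_ge (csInf_le (bddBelow_setOf_measure_Ioi_le (ofReal_lt_measure_univ_of_mem_Ioo hs)) h)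
  · intro hc
    refine lt_of_not_ge fun h => hc.not_ge ?_
    exact (measure_mono (Ioi_subset_Ioi h)).trans
      (measure_Ioi_upperQuantile_le hs.1 (ofReal_lt_measure_univ_of_mem_Ioo hs))

lemma antitoneOn_upperQuantile : AntitoneOn (upperQuantile ν) (Ioo 0 (ν univ).toReal) :=
  fun _ hs _ hs' hss' =>
    csInf_le_csInf (bddBelow_setOf_measure_Ioi_le (ofReal_lt_measure_univ_of_mem_Ioo hs'))
      (nonempty_setOf_measure_Ioi_le hs.1) fun _ hc => hc.trans (ENNReal.ofReal_le_ofReal hss')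

lemma aemeasurable_upperQuantile :
    AEMeasurable (upperQuantile ν) (volume.restrict (Ioo 0 (ν univ).toReal)) :=
  aemeasurable_restrict_of_antitoneOn measurableSet_Ioo antitoneOn_upperQuantile

lemma map_upperQuantile :
    (volume.restrict (Ioo 0 (ν univ).toReal)).map (upperQuantile ν) = ν := by
  set m := (volume.restrict (Ioo 0 (ν univ).toReal)).map (upperQuantile ν)
  have hIoi (c : ℝ) : m (Ioi c) = ν (Ioi c) := by
    have hτ : (ν (Ioi c)).toReal ≤ (ν univ).toReal :=
      ENNReal.toReal_mono (measure_ne_top ν _) (measure_mono (subset_univ _))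
    have hset : upperQuantile ν ⁻¹' Ioi c ∩ Ioo 0 (ν univ).toReal = Ioo 0 (ν (Ioi c)).toReal := by
      ext s
      simp only [mem_inter_iff, mem_preimage, mem_Ioi, mem_Ioo]
      constructor
      · rintro ⟨hc, hs⟩
        exact ⟨hs.1, (lt_upperQuantile_iff hs c).1 hc⟩
      · rintro ⟨hs₀, hsτ⟩
        have hs : s ∈ Ioo 0 (ν univ).toReal := ⟨hs₀, hsτ.trans_le hτ⟩
        exact ⟨(lt_upperQuantile_iff hs c).2 hsτ, hs⟩
    rw [Measure.map_apply_of_aemeasurable aemeasurable_upperQuantile measurableSet_Ioi,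
      Measure.restrict_apply' measurableSet_Ioo, hset, Real.volume_Ioo, sub_zero,
      ENNReal.ofReal_toReal (measure_ne_top ν _)]
  have huniv : m univ = ν univ := by
    rw [Measure.map_apply_of_aemeasurable aemeasurable_upperQuantile MeasurableSet.univ,
      preimage_univ, Measure.restrict_apply_univ, Real.volume_Ioo, sub_zero,
      ENNReal.ofReal_toReal (measure_ne_top ν _)]
  refine Measure.ext_of_Iic m ν fun c => ?_
  rw [← compl_Ioi, measure_compl measurableSet_Ioi (measure_ne_top m _),
    measure_compl measurableSet_Ioi (measure_ne_top ν _), hIoi, huniv]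

lemma integrableOn_upperQuantile (h : Integrable id ν) :
    IntegrableOn (upperQuantile ν) (Ioo 0 (ν univ).toReal) := by
  rw [← map_upperQuantile (ν := ν)] at h
  exact (integrable_map_measure aestronglyMeasurable_id aemeasurable_upperQuantile).1 h

lemma setIntegral_comp_upperQuantile {g : ℝ → ℝ} (hg : AEStronglyMeasurable g ν) :
    ∫ s in Ioo 0 (ν univ).toReal, g (upperQuantile ν s) = ∫ y, g y ∂ν := by
  have hg' : AEStronglyMeasurable g
      ((volume.restrict (Ioo 0 (ν univ).toReal)).map (upperQuantile ν)) := by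
    rwa [map_upperQuantile]
  rw [← integral_map aemeasurable_upperQuantile hg', map_upperQuantile]

/-- With `τ = ν (t, ∞)`, the upper quantile exceeds `t` exactly on `(0, τ)`. -/
lemma setIntegral_max_upperQuantile_sub_zero (t : ℝ) :
    ∫ s in Ioo 0 (ν univ).toReal, max (upperQuantile ν s - t) 0 =
      ∫ s in Ioo 0 (ν (Ioi t)).toReal, (upperQuantile ν s - t) := by
  have hIoo : Ioo 0 (ν (Ioi t)).toReal ⊆ Ioo 0 (ν univ).toReal := Ioo_subset_Ioo_right <|
    ENNReal.toReal_mono (measure_ne_top ν _) (measure_mono (subset_univ _))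
  have hposPart : EqOn (fun s => max (upperQuantile ν s - t) 0)
      ((Ioo 0 (ν (Ioi t)).toReal).indicator fun s => upperQuantile ν s - t)
      (Ioo 0 (ν univ).toReal) := by
    intro s hs
    by_cases hsτ : s < (ν (Ioi t)).toReal
    · rw [indicator_of_mem (show s ∈ Ioo 0 (ν (Ioi t)).toReal from ⟨hs.1, hsτ⟩)]
      exact max_eq_left (sub_nonneg.2 ((lt_upperQuantile_iff hs t).2 hsτ).le)
    · rw [indicator_of_notMem fun h => hsτ h.2]
      exact max_eq_right (sub_nonpos.2 (not_lt.1 (hsτ ∘ (lt_upperQuantile_iff hs t).1)))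
  rw [setIntegral_congr_fun measurableSet_Ioo hposPart, integral_indicator measurableSet_Ioo,
    Measure.restrict_restrict measurableSet_Ioo, inter_eq_left.2 hIoo]

end upperQuantile

theorem integral_posPart_sub_le_of_integral_upperQuantile_le {ν₁ ν₂ : Measure ℝ}
    [IsFiniteMeasure ν₁] [IsFiniteMeasure ν₂] (hmass : ν₁ univ = ν₂ univ)
    (h₁ : Integrable id ν₁) (h₂ : Integrable id ν₂)
    (hQ : ∀ τ, 0 ≤ τ → τ ≤ (ν₁ univ).toReal →
      ∫ s in (0 : ℝ)..τ, upperQuantile ν₁ s ≤ ∫ s in (0 : ℝ)..τ, upperQuantile ν₂ s) (t : ℝ) :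
    ∫ y, max (y - t) 0 ∂ν₁ ≤ ∫ y, max (y - t) 0 ∂ν₂ := by
  set M := (ν₁ univ).toReal
  set τ := (ν₁ (Ioi t)).toReal
  have hτ₀ : 0 ≤ τ := ENNReal.toReal_nonneg
  have hτM : τ ≤ M := ENNReal.toReal_mono (measure_ne_top ν₁ _) (measure_mono (subset_univ _))
  have hM : M = (ν₂ univ).toReal := congrArg ENNReal.toReal hmass
  have hIoo : Ioo 0 τ ⊆ Ioo 0 M := Ioo_subset_Ioo_right hτM
  have hQ₁ : IntegrableOn (upperQuantile ν₁) (Ioo 0 τ) :=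
    (integrableOn_upperQuantile h₁).mono_set hIoo
  have hQ₂ : IntegrableOn (upperQuantile ν₂) (Ioo 0 M) := by
    rw [hM]
    exact integrableOn_upperQuantile h₂
  have hQ₂t : IntegrableOn (fun s => upperQuantile ν₂ s - t) (Ioo 0 M) :=
    hQ₂.sub (integrable_const t)
  have hQ₂pos : IntegrableOn (fun s => max (upperQuantile ν₂ s - t) 0) (Ioo 0 M) := hQ₂t.pos_part
  have hmean : ∫ s in Ioo 0 τ, upperQuantile ν₁ s ≤ ∫ s in Ioo 0 τ, upperQuantile ν₂ s := by
    have h := hQ τ hτ₀ hτM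
    rwa [intervalIntegral.integral_of_le hτ₀, intervalIntegral.integral_of_le hτ₀,
      integral_Ioc_eq_integral_Ioo, integral_Ioc_eq_integral_Ioo] at h
  have hcont : Continuous fun y : ℝ => max (y - t) 0 := by fun_prop
  calc ∫ y, max (y - t) 0 ∂ν₁
      = ∫ s in Ioo 0 M, max (upperQuantile ν₁ s - t) 0 :=
        (setIntegral_comp_upperQuantile hcont.aestronglyMeasurable).symm
    _ = ∫ s in Ioo 0 τ, (upperQuantile ν₁ s - t) := setIntegral_max_upperQuantile_sub_zero t
    _ ≤ ∫ s in Ioo 0 τ, (upperQuantile ν₂ s - t) := by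
        rw [integral_sub hQ₁ (integrable_const t),
          integral_sub (hQ₂.mono_set hIoo) (integrable_const t)]
        exact sub_le_sub_right hmean _
    _ ≤ ∫ s in Ioo 0 τ, max (upperQuantile ν₂ s - t) 0 :=
        integral_mono (hQ₂t.mono_set hIoo) (hQ₂pos.mono_set hIoo)
          fun s => le_max_left _ _
    _ ≤ ∫ s in Ioo 0 M, max (upperQuantile ν₂ s - t) 0 :=
        setIntegral_mono_set hQ₂pos
          (Eventually.of_forall fun s => le_max_right _ _) hIoo.eventuallyLE
    _ = ∫ y, max (y - t) 0 ∂ν₂ := by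
        rw [hM]
        exact setIntegral_comp_upperQuantile hcont.aestronglyMeasurable

lemma integral_posPart_sub_le_of_integral_decRearr_le {X : Type*} [MeasurableSpace X]
    {μ : Measure X} [IsFiniteMeasure μ] {u v : X → ℝ} (hu : Integrable u μ) (hv : Integrable v μ)
    (hstar : ∀ t : ℝ, 0 ≤ t → t ≤ (μ univ).toReal →
      (∫ s in (0 : ℝ)..t, decRearr μ u s) ≤ ∫ s in (0 : ℝ)..t, decRearr μ v s) (t : ℝ) :
    ∫ x, max (u x - t) 0 ∂μ ≤ ∫ x, max (v x - t) 0 ∂μ := by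
  have hmass {f : X → ℝ} (hf : AEMeasurable f μ) : μ.map f univ = μ univ := by
    rw [Measure.map_apply_of_aemeasurable hf MeasurableSet.univ, preimage_univ]
  have hcont : Continuous fun y : ℝ => max (y - t) 0 := by fun_prop
  rw [← integral_map hu.aemeasurable hcont.aestronglyMeasurable,
    ← integral_map hv.aemeasurable hcont.aestronglyMeasurable]
  refine integral_posPart_sub_le_of_integral_upperQuantile_le
    ((hmass hu.aemeasurable).trans (hmass hv.aemeasurable).symm)
    ((integrable_map_measure aestronglyMeasurable_id hu.aemeasurable).2 hu)
    ((integrable_map_measure aestronglyMeasurable_id hv.aemeasurable).2 hv) (fun τ hτ₀ hτ => ?_) t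
  rw [← decRearr_eq_upperQuantile_map hu.aemeasurable,
    ← decRearr_eq_upperQuantile_map hv.aemeasurable]
  exact hstar τ hτ₀ (hmass hu.aemeasurable ▸ hτ)

section StopLoss

variable {X : Type*} [MeasurableSpace X] {μ : Measure X} {u v : X → ℝ}

structure IntegralCompLE (μ : Measure X) (u v : X → ℝ) (g : ℝ → ℝ) : Prop where
  integrable_left : Integrable (fun x => g (u x)) μ
  integrable_right : Integrable (fun x => g (v x)) μ
  integral_le : ∫ x, g (u x) ∂μ ≤ ∫ x, g (v x) ∂μ

lemma IntegralCompLE.add {g h : ℝ → ℝ} (hg : IntegralCompLE μ u v g)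
    (hh : IntegralCompLE μ u v h) : IntegralCompLE μ u v fun y => g y + h y where
  integrable_left := hg.integrable_left.add hh.integrable_left
  integrable_right := hg.integrable_right.add hh.integrable_right
  integral_le := by
    rw [integral_add hg.integrable_left hh.integrable_left,
      integral_add hg.integrable_right hh.integrable_right]
    exact add_le_add hg.integral_le hh.integral_le

variable [IsFiniteMeasure μ]

lemma tendsto_integral_max_sub_zero_atBot (hv : Integrable v μ) :
    Tendsto (fun t => ∫ x, max (t - v x) 0 ∂μ) atBot (𝓝 0) := by
  have h := tendsto_integral_filter_of_dominated_convergence (l := atBot) (μ := μ)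
    (F := fun t x => max (t - v x) 0) (f := fun _ => 0) (fun x => |v x|)
    (Eventually.of_forall fun t => ((integrable_const t).sub hv).pos_part.1)
    ((eventually_le_atBot 0).mono fun t ht => Eventually.of_forall fun x => by
      rw [Real.norm_eq_abs, abs_of_nonneg (le_max_right _ _)]
      exact max_le (by linarith [neg_abs_le (v x)]) (abs_nonneg _))
    hv.abs
    (Eventually.of_forall fun x => tendsto_const_nhds.congr' <|
      (eventually_le_atBot (v x)).mono fun t ht => (max_eq_right (sub_nonpos.2 ht)).symm)
  simpa using h

lemma integral_le_of_integral_posPart_sub_le (hu : Integrable u μ) (hv : Integrable v μ)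
    (h : ∀ t, ∫ x, max (u x - t) 0 ∂μ ≤ ∫ x, max (v x - t) 0 ∂μ) :
    ∫ x, u x ∂μ ≤ ∫ x, v x ∂μ := by
  have hbound (t : ℝ) : ∫ x, u x ∂μ ≤ ∫ x, v x ∂μ + ∫ x, max (t - v x) 0 ∂μ := by
    have hu_t : ∫ x, (u x - t) ∂μ ≤ ∫ x, max (u x - t) 0 ∂μ :=
      integral_mono (hu.sub (integrable_const t)) (hu.sub (integrable_const t)).pos_part
        fun x => le_max_left _ _
    have hv_t : ∫ x, max (v x - t) 0 ∂μ = ∫ x, (v x - t) ∂μ + ∫ x, max (t - v x) 0 ∂μ := by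
      have hvt : Integrable (fun x => v x - t) μ := hv.sub (integrable_const t)
      have htv : Integrable (fun x => max (t - v x) 0) μ := ((integrable_const t).sub hv).pos_part
      rw [← integral_add hvt htv]
      congr 1 with x
      linarith [neg_sub (v x) t ▸ max_zero_sub_max_neg_zero_eq_self (v x - t)]
    rw [integral_sub hu (integrable_const t)] at hu_t
    rw [integral_sub hv (integrable_const t)] at hv_t
    linarith [h t]
  simpa using ge_of_tendsto (tendsto_const_nhds.add (tendsto_integral_max_sub_zero_atBot hv))
    (Eventually.of_forall hbound)

lemma integralCompLE_affine (hu : Integrable u μ) (hv : Integrable v μ)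
    (huv : ∫ x, u x ∂μ ≤ ∫ x, v x ∂μ) (a : ℝ) {b : ℝ} (hb : 0 ≤ b) :
    IntegralCompLE μ u v fun y => a + b * y where
  integrable_left := (integrable_const a).add (hu.const_mul b)
  integrable_right := (integrable_const a).add (hv.const_mul b)
  integral_le := by
    rw [integral_add (integrable_const a) (hu.const_mul b),
      integral_add (integrable_const a) (hv.const_mul b), integral_const_mul, integral_const_mul]
    gcongr

lemma integralCompLE_max_affine_zero (hu : Integrable u μ) (hv : Integrable v μ)
    (h : ∀ t, ∫ x, max (u x - t) 0 ∂μ ≤ ∫ x, max (v x - t) 0 ∂μ) (a : ℝ) {b : ℝ} (hb : 0 ≤ b) :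
    IntegralCompLE μ u v fun y => max (a + b * y) 0 := by
  rcases hb.eq_or_lt with rfl | hb
  · simpa using ⟨integrable_const _, integrable_const _, le_rfl⟩
  have hhinge : (fun y => max (a + b * y) 0) = fun y => b * max (y - -a / b) 0 := by
    ext y
    rw [mul_max_of_nonneg _ _ hb.le, mul_zero]
    congr 1
    field_simp
    ring
  rw [hhinge]
  exact {
    integrable_left := (hu.sub (integrable_const _)).pos_part.const_mul b
    integrable_right := (hv.sub (integrable_const _)).pos_part.const_mul b
    integral_le := by
      rw [integral_const_mul, integral_const_mul]
      exact mul_le_mul_of_nonneg_left (h _) hb.le }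

end StopLoss

def rightTangent (φ : ℝ → ℝ) (q y : ℝ) : ℝ :=
  φ q + derivWithin φ (Ioi q) q * (y - q)

def firstRationals (n : ℕ) : Finset ℝ :=
  (Finset.range (n + 1)).image fun k => (((Denumerable.eqv ℚ).symm k : ℚ) : ℝ)

lemma firstRationals_nonempty (n : ℕ) : (firstRationals n).Nonempty :=
  ⟨_, Finset.mem_image_of_mem _ (Finset.self_mem_range_succ n)⟩

lemma monotone_firstRationals : Monotone firstRationals := fun _ _ hmn =>
  Finset.image_subset_image (Finset.range_subset_range.2 (Nat.succ_le_succ hmn))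

lemma cast_mem_firstRationals {q : ℚ} {n : ℕ} (hn : Denumerable.eqv ℚ q ≤ n) :
    (q : ℝ) ∈ firstRationals n :=
  Finset.mem_image.2 ⟨Denumerable.eqv ℚ q, Finset.mem_range.2 (Nat.lt_succ_of_le hn),
    by rw [Equiv.symm_apply_apply]⟩

namespace ConvexOn

variable {φ : ℝ → ℝ}

lemma rightTangent_le (hφ : ConvexOn ℝ univ φ) (q y : ℝ) : rightTangent φ q y ≤ φ y := by
  have hq : q ∈ interior univ := by simp
  unfold rightTangent
  rcases lt_trichotomy y q with hyq | rfl | hqy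
  · have h := (hφ.slope_le_leftDeriv_of_mem_interior (mem_univ y) hq hyq).trans
      (hφ.leftDeriv_le_rightDeriv_of_mem_interior hq)
    rw [slope_def_field, div_le_iff₀ (sub_pos.2 hyq)] at h
    linarith
  · simp
  · have h := hφ.rightDeriv_le_slope_of_mem_interior hq (mem_univ y) hqy
    rw [slope_def_field, le_div_iff₀ (sub_pos.2 hqy)] at h
    linarith

lemma monotone_rightDeriv (hφ : ConvexOn ℝ univ φ) :
    Monotone fun q => derivWithin φ (Ioi q) q := by
  simpa using hφ.monotoneOn_rightDeriv

lemma rightTangent_le_rightTangent_of_le_left (hφ : ConvexOn ℝ univ φ) {p q y : ℝ} (hpq : p ≤ q)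
    (hyp : y ≤ p) : rightTangent φ q y ≤ rightTangent φ p y := by
  have h := hφ.rightTangent_le q p
  have hd := hφ.monotone_rightDeriv hpq
  unfold rightTangent at *
  nlinarith

lemma rightTangent_le_rightTangent_of_le_right (hφ : ConvexOn ℝ univ φ) {p q y : ℝ} (hpq : p ≤ q)
    (hqy : q ≤ y) : rightTangent φ p y ≤ rightTangent φ q y := by
  have h := hφ.rightTangent_le p q
  have hd := hφ.monotone_rightDeriv hpq
  unfold rightTangent at *
  nlinarith

/-- To the right of `max s` the envelope of the tangents at `s` is the tangent at `max s`. -/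
lemma max_rightTangent_sup' (hφ : ConvexOn ℝ univ φ) {s : Finset ℝ} (hs : s.Nonempty) {a : ℝ}
    (ha : ∀ q ∈ s, q < a) (y : ℝ) :
    max (rightTangent φ a y) (s.sup' hs fun q => rightTangent φ q y) =
      s.sup' hs (fun q => rightTangent φ q y) +
        max (rightTangent φ a y - rightTangent φ (s.max' hs) y) 0 := by
  set p := s.max' hs
  have hpa : p ≤ a := (ha p (s.max'_mem hs)).le
  rcases le_total y p with hyp | hpy
  · have h := (hφ.rightTangent_le_rightTangent_of_le_left hpa hyp).trans
      (s.le_sup' (fun q => rightTangent φ q y) (s.max'_mem hs))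
    rw [max_eq_right h, max_eq_right (sub_nonpos.2
      (hφ.rightTangent_le_rightTangent_of_le_left hpa hyp)), add_zero]
  · have hsup : s.sup' hs (fun q => rightTangent φ q y) = rightTangent φ p y :=
      le_antisymm (s.sup'_le _ _ fun q hq =>
          hφ.rightTangent_le_rightTangent_of_le_right (s.le_max' q hq) hpy)
        (s.le_sup' (fun q => rightTangent φ q y) (s.max'_mem hs))
    rw [hsup]
    rcases le_total (rightTangent φ a y) (rightTangent φ p y) with h | h
    · rw [max_eq_right h, max_eq_right (sub_nonpos.2 h), add_zero]
    · rw [max_eq_left h, max_eq_left (sub_nonneg.2 h)]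
      ring

lemma exists_rat_lt_rightTangent (hφ : ConvexOn ℝ univ φ) (hm : Monotone φ) {a y : ℝ}
    (ha : a < φ y) : ∃ q : ℚ, a < rightTangent φ q y := by
  set r := derivWithin φ (Ioi (y + 1)) (y + 1)
  have hr : 0 ≤ r := (hm.monotoneOn _).derivWithin_nonneg
  obtain ⟨q, hyq, hq⟩ := exists_rat_btwn (lt_add_of_pos_right y
    (lt_min one_pos (div_pos (sub_pos.2 ha) (add_pos_of_nonneg_of_pos hr one_pos))))
  refine ⟨q, ?_⟩
  have hq1 : (q : ℝ) ≤ y + 1 := hq.le.trans (by gcongr; exact min_le_left _ _)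
  have hqε : ((q : ℝ) - y) * (r + 1) < φ y - a := by
    have := (lt_min_iff.1 (sub_lt_iff_lt_add'.2 hq)).2
    rwa [lt_div_iff₀ (by positivity)] at this
  have hd : derivWithin φ (Ioi (q : ℝ)) q ≤ r := hφ.monotone_rightDeriv hq1
  have hd₀ : 0 ≤ derivWithin φ (Ioi (q : ℝ)) q := (hm.monotoneOn _).derivWithin_nonneg
  have hφq : φ y ≤ φ q := hm hyq.le
  unfold rightTangent
  nlinarith

variable {X : Type*} [MeasurableSpace X] {μ : Measure X} [IsFiniteMeasure μ] {u v : X → ℝ}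

lemma integralCompLE_sup'_rightTangent (hφ : ConvexOn ℝ univ φ) (hm : Monotone φ)
    (hu : Integrable u μ) (hv : Integrable v μ)
    (h : ∀ t, ∫ x, max (u x - t) 0 ∂μ ≤ ∫ x, max (v x - t) 0 ∂μ) (s : Finset ℝ)
    (hs : s.Nonempty) : IntegralCompLE μ u v fun y => s.sup' hs fun q => rightTangent φ q y := by
  have huv := integral_le_of_integral_posPart_sub_le hu hv h
  induction s using Finset.induction_on_max with
  | empty => exact absurd hs Finset.not_nonempty_empty
  | insert a s ha ih =>
    rcases s.eq_empty_or_nonempty with rfl | hs'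
    · simp only [insert_empty_eq, Finset.sup'_singleton]
      convert integralCompLE_affine hu hv huv (φ a - derivWithin φ (Ioi a) a * a)
        (hm.monotoneOn _).derivWithin_nonneg using 2 with y
      unfold rightTangent
      ring
    · set p := s.max' hs'
      simp only [Finset.sup'_insert hs', hφ.max_rightTangent_sup' hs' ha]
      convert (ih hs').add (integralCompLE_max_affine_zero hu hv h
        (φ a - derivWithin φ (Ioi a) a * a - (φ p - derivWithin φ (Ioi p) p * p))
        (sub_nonneg.2 (hφ.monotone_rightDeriv (ha p (s.max'_mem hs')).le))) using 4 with y
      unfold rightTangent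
      ring

lemma tendsto_sup'_rightTangent_firstRationals (hφ : ConvexOn ℝ univ φ) (hm : Monotone φ) (y : ℝ) :
    Tendsto (fun n => (firstRationals n).sup' (firstRationals_nonempty n)
      fun q => rightTangent φ q y) atTop (𝓝 (φ y)) := by
  refine tendsto_order.2 ⟨fun a ha => ?_, fun a ha => Eventually.of_forall fun n =>
    ((Finset.sup'_le _ _ fun q _ => hφ.rightTangent_le q y).trans_lt ha)⟩
  obtain ⟨q, hq⟩ := hφ.exists_rat_lt_rightTangent hm ha
  filter_upwards [eventually_ge_atTop (Denumerable.eqv ℚ q)] with n hn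
  exact hq.trans_le (Finset.le_sup' (fun q => rightTangent φ q y) (cast_mem_firstRationals hn))

theorem integral_comp_le_of_integral_posPart_sub_le (hφ : ConvexOn ℝ univ φ) (hm : Monotone φ)
    (hu : Integrable u μ) (hv : Integrable v μ) (hφu : Integrable (fun x => φ (u x)) μ)
    (hφv : Integrable (fun x => φ (v x)) μ)
    (h : ∀ t, ∫ x, max (u x - t) 0 ∂μ ≤ ∫ x, max (v x - t) 0 ∂μ) :
    ∫ x, φ (u x) ∂μ ≤ ∫ x, φ (v x) ∂μ := by
  set g : ℕ → ℝ → ℝ := fun n y =>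
    (firstRationals n).sup' (firstRationals_nonempty n) fun q => rightTangent φ q y
  have hg (n : ℕ) : IntegralCompLE μ u v (g n) :=
    hφ.integralCompLE_sup'_rightTangent hm hu hv h _ _
  have hg_mono (y : ℝ) : Monotone fun n => g n y := fun m n hmn =>
    Finset.sup'_mono _ (monotone_firstRationals hmn) _
  have hg_lim (w : X → ℝ) (hw : Integrable (fun x => φ (w x)) μ)
      (hgw : ∀ n, Integrable (fun x => g n (w x)) μ) :
      Tendsto (fun n => ∫ x, g n (w x) ∂μ) atTop (𝓝 (∫ x, φ (w x) ∂μ)) :=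
    integral_tendsto_of_tendsto_of_monotone hgw hw (ae_of_all _ fun x => hg_mono (w x))
      (ae_of_all _ fun x => hφ.tendsto_sup'_rightTangent_firstRationals hm (w x))
  exact le_of_tendsto_of_tendsto' (hg_lim u hφu fun n => (hg n).integrable_left)
    (hg_lim v hφv fun n => (hg n).integrable_right) fun n => (hg n).integral_le

end ConvexOn

/-- **Majorization**: if `∫₀ᵗ u* ≤ ∫₀ᵗ v*` for all `t`, then the increasing convex means of
`u` are dominated by those of `v`. -/
theorem majorization_increasing_convex {X : Type*} [MeasurableSpace X] (μ : Measure X)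
    [IsFiniteMeasure μ] (u v : X → ℝ) (hu : Integrable u μ) (hv : Integrable v μ)
    (hstar : ∀ t : ℝ, 0 ≤ t → t ≤ (μ univ).toReal →
      (∫ s in (0 : ℝ)..t, decRearr μ u s) ≤ ∫ s in (0 : ℝ)..t, decRearr μ v s) :
    ∀ φ : ℝ → ℝ, ConvexOn ℝ univ φ → Monotone φ →
      Integrable (fun x => φ (u x)) μ → Integrable (fun x => φ (v x)) μ →
      (∫ x, φ (u x) ∂μ) ≤ ∫ x, φ (v x) ∂μ :=
  fun _ hφ hm hφu hφv => hφ.integral_comp_le_of_integral_posPart_sub_le hm hu hv hφu hφv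
    (integral_posPart_sub_le_of_integral_decRearr_le hu hv hstar)
end
end

section
/- Let n ≥ 2, let D ⊆ ℝ^{n−1} be a bounded open set, ℓ > 0, and Ω = D × (0,ℓ). Suppose u is C² on Ω̄ and u_y(x,0) = 0 for every x ∈ D. Then the function Ju, defined by Ju(x,y) = ∫₀^y u(x,t) dt, is twice continuously differentiable on Ω, and for every (x,y) ∈ Ω, Δ(Ju)(x,y) = ∫₀^y Δu(x,t) dt. -/
/-!
Write `J f (x, y) = ∫₀ʸ f (x, t) dt`. Near a point `p` whose vertical segment `{p.1} × [0, p.2]`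
lies in the open set `U` on which `u` is C², split
`J u q = ∫₀^{p.2} u (q.1, t) dt + ∫_{p.2}^{q.2} u (q.1, t) dt`: the first term is differentiated
under the integral sign (compactness of the segment provides the domination), the second one by
the fundamental theorem of calculus. This gives `D (J u) (h, k) = J (∂ₓ u) h + k u`, and iterating
yields C² regularity. The horizontal second derivatives of `J u` are therefore `J` of those of `u`,
while `∂²_y (J u) = ∂_y u = J (∂²_y u) + u_y (·, 0)`, whose boundary term vanishes by hypothesis.
Every point of the open cylinder has its vertical segment in the closed cylinder, hence in `U`.
-/

open MeasureTheory Set Bornology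

noncomputable section

/-- Points of the cylinder `D × (0,ℓ)` are pairs `(x, y)` with `x ∈ ℝ^m`, `y ∈ ℝ`. -/
abbrev Cyl (m : ℕ) := EuclideanSpace ℝ (Fin m) × ℝ

/-- The Laplacian on the cylinder: sum of all second partial derivatives. -/
def cylLap {m : ℕ} (u : Cyl m → ℝ) (p : Cyl m) : ℝ :=
  (∑ i : Fin m, fderiv ℝ (fun q => fderiv ℝ u q (EuclideanSpace.single i 1, 0)) p
      (EuclideanSpace.single i 1, 0)) +
    fderiv ℝ (fun q => fderiv ℝ u q ((0 : EuclideanSpace ℝ (Fin m)), (1 : ℝ))) p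
      ((0 : EuclideanSpace ℝ (Fin m)), (1 : ℝ))

/-- The Laplacian on `ℝ^m`: sum of second partial derivatives. -/
def lapD {m : ℕ} (ψ : EuclideanSpace ℝ (Fin m) → ℝ) (x : EuclideanSpace ℝ (Fin m)) : ℝ :=
  ∑ i : Fin m, fderiv ℝ (fun y => fderiv ℝ ψ y (EuclideanSpace.single i 1)) x
    (EuclideanSpace.single i 1)

/-- `u` is C² on an open neighborhood of the closure of `A`. -/
def IsC2OnClosure {Y : Type*} [NormedAddCommGroup Y] [NormedSpace ℝ Y]
    (u : Y → ℝ) (A : Set Y) : Prop :=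
  ∃ U, IsOpen U ∧ closure A ⊆ U ∧ ContDiffOn ℝ 2 u U

open Filter Topology intervalIntegral

section Segment

variable {X : Type*}

def verticalSegment (p : X × ℝ) : Set (X × ℝ) := {p.1} ×ˢ uIcc 0 p.2

lemma mk_mem_verticalSegment {p : X × ℝ} {t : ℝ} (ht : t ∈ uIcc 0 p.2) :
    (p.1, t) ∈ verticalSegment p :=
  mk_mem_prod rfl ht

lemma self_mem_verticalSegment (p : X × ℝ) : p ∈ verticalSegment p :=
  mk_mem_verticalSegment right_mem_uIcc

lemma uIcc_zero_eq_image_mul (y : ℝ) : uIcc 0 y = (· * y) '' Icc 0 1 := by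
  rw [← segment_eq_uIcc, segment_eq_image]
  simp

lemma dist_mk_le_of_mem_uIcc [PseudoMetricSpace X] {p q : X × ℝ} {t : ℝ}
    (ht : t ∈ uIcc p.2 q.2) : dist (q.1, t) p ≤ dist q p := by
  rw [Prod.dist_eq, Prod.dist_eq]
  exact max_le_max le_rfl (Real.dist_right_le_of_mem_uIcc (by rwa [uIcc_comm]))

variable [TopologicalSpace X] {V : Set (X × ℝ)} {p : X × ℝ}

lemma isCompact_verticalSegment (p : X × ℝ) : IsCompact (verticalSegment p) :=
  isCompact_singleton.prod isCompact_uIcc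

lemma verticalSegment_subset_closure {A : Set X} {ℓ : ℝ} (hp : p ∈ A ×ˢ Ioo 0 ℓ) :
    verticalSegment p ⊆ closure (A ×ˢ Ioo 0 ℓ) := by
  rw [verticalSegment, closure_prod_eq, closure_Ioo (hp.2.1.trans hp.2.2).ne,
    uIcc_of_le hp.2.1.le]
  exact prod_mono (singleton_subset_iff.2 (subset_closure hp.1))
    (Icc_subset_Icc_right hp.2.2.le)

-- Parametrizing `uIcc 0 q.2` by `Icc 0 1` turns this into the tube lemma for the compact `Icc 0 1`.
lemma isOpen_setOf_verticalSegment_subset (hV : IsOpen V) :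
    IsOpen {p : X × ℝ | verticalSegment p ⊆ V} := by
  have hseg : ∀ q : X × ℝ, verticalSegment q ⊆ V ↔ ∀ s ∈ Icc (0 : ℝ) 1, (q.1, s * q.2) ∈ V := by
    intro q
    simp only [verticalSegment, uIcc_zero_eq_image_mul, prod_subset_iff, mem_singleton_iff,
      forall_mem_image]
    constructor
    · intro h s hs; exact h q.1 rfl hs
    · rintro h x rfl s hs; exact h s hs
  refine isOpen_iff_eventually.2 fun p hp => ?_
  refine (isCompact_Icc.eventually_forall_of_forall_eventually fun s hs => ?_).mono
    fun q hq => (hseg q).2 hq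
  have hΦ : Continuous fun z : (X × ℝ) × ℝ => (z.1.1, z.2 * z.1.2) := by fun_prop
  exact hΦ.continuousAt.preimage_mem_nhds (hV.mem_nhds ((hseg p).1 hp s hs))

variable {F : Type*} [NormedAddCommGroup F] {g : X × ℝ → F}

lemma exists_bound_near_verticalSegment (hV : IsOpen V) (hg : ContinuousOn g V)
    (hp : verticalSegment p ⊆ V) :
    ∃ C, ∀ᶠ x in 𝓝 p.1, verticalSegment (x, p.2) ⊆ V ∧
      ∀ z ∈ verticalSegment (x, p.2), ‖g z‖ ≤ C := by
  obtain ⟨M, hM⟩ := (isCompact_verticalSegment p).exists_bound_of_continuousOn (hg.mono hp)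
  have hW : IsOpen (V ∩ g ⁻¹' {w | ‖w‖ < M + 1}) :=
    hg.isOpen_inter_preimage hV (isOpen_lt continuous_norm continuous_const)
  have hpW : verticalSegment p ⊆ V ∩ g ⁻¹' {w | ‖w‖ < M + 1} :=
    fun z hz => ⟨hp hz, (hM z hz).trans_lt (lt_add_one M)⟩
  refine ⟨M + 1, eventually_of_mem ((continuous_id.prodMk continuous_const).continuousAt
    |>.preimage_mem_nhds ((isOpen_setOf_verticalSegment_subset hW).mem_nhds hpW))
    fun x hx => ⟨hx.trans inter_subset_left, fun z hz => (hx hz).2.le⟩⟩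

lemma ContinuousOn.intervalIntegrable_of_verticalSegment_subset (hg : ContinuousOn g V)
    (hp : verticalSegment p ⊆ V) : IntervalIntegrable (fun t => g (p.1, t)) volume 0 p.2 :=
  (hg.comp (by fun_prop : Continuous fun t : ℝ => (p.1, t)).continuousOn
    fun _ ht => hp (mk_mem_verticalSegment ht)).intervalIntegrable

variable [NormedSpace ℝ F]

def verticalPrimitive (f : X × ℝ → F) (q : X × ℝ) : F := ∫ t in (0 : ℝ)..q.2, f (q.1, t)

lemma continuousAt_integral_slice [FirstCountableTopology X] (hV : IsOpen V)
    (hg : ContinuousOn g V) (hp : verticalSegment p ⊆ V) :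
    ContinuousAt (fun x => ∫ t in (0 : ℝ)..p.2, g (x, t)) p.1 := by
  obtain ⟨C, hCx⟩ := exists_bound_near_verticalSegment hV hg hp
  refine continuousAt_of_dominated_interval (bound := fun _ => C)
    (hCx.mono fun x hx => ?_) (hCx.mono fun x hx => ?_) intervalIntegrable_const
    (ae_of_all _ fun t ht => ?_)
  · exact (hg.intervalIntegrable_of_verticalSegment_subset hx.1).def'.aestronglyMeasurable
  · exact ae_of_all _ fun t ht => hx.2 _ (mk_mem_verticalSegment (uIoc_subset_uIcc ht))
  · have hpt : (p.1, t) ∈ V := hp (mk_mem_verticalSegment (uIoc_subset_uIcc ht))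
    exact (hg.continuousAt (hV.mem_nhds hpt)).comp (f := fun x => (x, t)) (by fun_prop)

lemma verticalPrimitive_eventuallyEq_add (hV : IsOpen V) (hg : ContinuousOn g V)
    (hp : verticalSegment p ⊆ V) :
    verticalPrimitive g =ᶠ[𝓝 p]
      fun q => (∫ t in (0 : ℝ)..p.2, g (q.1, t)) + ∫ t in p.2..q.2, g (q.1, t) := by
  have hS := (isOpen_setOf_verticalSegment_subset hV).mem_nhds hp
  have hS' : ∀ᶠ q in 𝓝 p, verticalSegment (q.1, p.2) ⊆ V :=
    (continuous_fst.prodMk continuous_const).continuousAt.preimage_mem_nhds hS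
  filter_upwards [hS, hS'] with q hq hq'
  have h0p := hg.intervalIntegrable_of_verticalSegment_subset hq'
  have h0q := hg.intervalIntegrable_of_verticalSegment_subset hq
  exact (integral_add_adjacent_intervals h0p (h0p.symm.trans h0q)).symm

end Segment

section Primitive

variable {E F : Type*} [NormedAddCommGroup E] [NormedSpace ℝ E]
  [NormedAddCommGroup F] [NormedSpace ℝ F] {V : Set (E × ℝ)} {p : E × ℝ} {f g : E × ℝ → F}

def horizontalFDeriv (f : E × ℝ → F) (z : E × ℝ) : E →L[ℝ] F :=
  fderiv ℝ f z ∘L ContinuousLinearMap.inl ℝ E ℝ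

lemma contDiffOn_horizontalFDeriv {m n : WithTop ℕ∞} (hV : IsOpen V)
    (hf : ContDiffOn ℝ n f V) (hmn : m + 1 ≤ n) : ContDiffOn ℝ m (horizontalFDeriv f) V :=
  (hf.fderiv_of_isOpen hV hmn).clm_comp contDiffOn_const

lemma hasFDerivAt_integral_slice (hV : IsOpen V) (hf : ContDiffOn ℝ 1 f V)
    (hp : verticalSegment p ⊆ V) :
    HasFDerivAt (fun x => ∫ t in (0 : ℝ)..p.2, f (x, t))
      (verticalPrimitive (horizontalFDeriv f) p) p.1 := by
  have hf' : ContinuousOn (horizontalFDeriv f) V :=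
    (contDiffOn_horizontalFDeriv (m := 0) hV hf (by norm_num)).continuousOn
  obtain ⟨C, hC⟩ := exists_bound_near_verticalSegment hV hf' hp
  obtain ⟨s, hs, hsC⟩ := hC.exists_mem
  refine hasFDerivAt_integral_of_dominated_of_fderiv_le (bound := fun _ => C) hs
    (eventually_of_mem hs fun x hx => ?_)
    (hf.continuousOn.intervalIntegrable_of_verticalSegment_subset hp)
    (hf'.intervalIntegrable_of_verticalSegment_subset hp).def'.aestronglyMeasurable
    (ae_of_all _ fun t ht x hx => (hsC x hx).2 _ (mk_mem_verticalSegment (uIoc_subset_uIcc ht)))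
    intervalIntegrable_const (ae_of_all _ fun t ht x hx => ?_)
  · exact (hf.continuousOn.intervalIntegrable_of_verticalSegment_subset
      (hsC x hx).1).def'.aestronglyMeasurable
  · have hxt : (x, t) ∈ V := (hsC x hx).1 (mk_mem_verticalSegment (uIoc_subset_uIcc ht))
    exact ((hf.differentiableOn one_ne_zero).differentiableAt
      (hV.mem_nhds hxt)).hasFDerivAt.comp x (hasFDerivAt_prodMk_left x t)

variable [CompleteSpace F]

lemma hasFDerivAt_integral_from_snd (hV : V ∈ 𝓝 p) (hg : ContinuousOn g V) :
    HasFDerivAt (fun q : E × ℝ => ∫ t in p.2..q.2, g (q.1, t))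
      ((ContinuousLinearMap.snd ℝ E ℝ).smulRight (g p)) p := by
  refine hasFDerivAt_iff_isLittleO.2 (Asymptotics.isLittleO_iff.2 fun ε hε => ?_)
  obtain ⟨δ, hδ, hball⟩ := Metric.eventually_nhds_iff.1
    (inter_mem hV ((hg.continuousAt hV).preimage_mem_nhds (Metric.closedBall_mem_nhds (g p) hε)))
  filter_upwards [Metric.ball_mem_nhds p hδ] with q hq
  have hslice : ∀ t ∈ uIcc p.2 q.2, (q.1, t) ∈ V ∧ dist (g (q.1, t)) (g p) ≤ ε :=
    fun t ht => hball ((dist_mk_le_of_mem_uIcc ht).trans_lt hq)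
  have hint : IntervalIntegrable (fun t => g (q.1, t)) volume p.2 q.2 :=
    (hg.comp (by fun_prop : Continuous fun t : ℝ => (q.1, t)).continuousOn
      fun t ht => (hslice t ht).1).intervalIntegrable
  calc ‖(∫ t in p.2..q.2, g (q.1, t)) - (∫ t in p.2..p.2, g (p.1, t))
        - (ContinuousLinearMap.snd ℝ E ℝ).smulRight (g p) (q - p)‖
      = ‖∫ t in p.2..q.2, (g (q.1, t) - g p)‖ := by
        rw [integral_sub hint intervalIntegrable_const, integral_same,
          intervalIntegral.integral_const]
        simp
    _ ≤ ε * |q.2 - p.2| := norm_integral_le_of_norm_le_const fun t ht => by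
        simpa [dist_eq_norm] using (hslice t (uIoc_subset_uIcc ht)).2
    _ ≤ ε * ‖q - p‖ := by gcongr; exact norm_snd_le (q - p)

lemma continuousAt_verticalPrimitive (hV : IsOpen V) (hg : ContinuousOn g V)
    (hp : verticalSegment p ⊆ V) : ContinuousAt (verticalPrimitive g) p :=
  (((continuousAt_integral_slice hV hg hp).comp continuousAt_fst).add
    (hasFDerivAt_integral_from_snd (hV.mem_nhds (hp (self_mem_verticalSegment p)))
      hg).continuousAt).congr (verticalPrimitive_eventuallyEq_add hV hg hp).symm

lemma hasFDerivAt_verticalPrimitive (hV : IsOpen V) (hf : ContDiffOn ℝ 1 f V)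
    (hp : verticalSegment p ⊆ V) :
    HasFDerivAt (verticalPrimitive f)
      (verticalPrimitive (horizontalFDeriv f) p ∘L ContinuousLinearMap.fst ℝ E ℝ +
        (ContinuousLinearMap.snd ℝ E ℝ).smulRight (f p)) p :=
  (((hasFDerivAt_integral_slice hV hf hp).comp p hasFDerivAt_fst).add
    (hasFDerivAt_integral_from_snd (hV.mem_nhds (hp (self_mem_verticalSegment p)))
      hf.continuousOn)).congr_of_eventuallyEq
    (verticalPrimitive_eventuallyEq_add hV hf.continuousOn hp)

lemma fderiv_verticalPrimitive_apply (hV : IsOpen V) (hf : ContDiffOn ℝ 1 f V)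
    (hp : verticalSegment p ⊆ V) (w : E × ℝ) :
    fderiv ℝ (verticalPrimitive f) p w =
      verticalPrimitive (fun z => fderiv ℝ f z (w.1, 0)) p + w.2 • f p := by
  have hf' : ContinuousOn (horizontalFDeriv f) V :=
    (contDiffOn_horizontalFDeriv (m := 0) hV hf (by norm_num)).continuousOn
  rw [(hasFDerivAt_verticalPrimitive hV hf hp).fderiv, verticalPrimitive, verticalPrimitive,
    add_apply, ContinuousLinearMap.comp_apply,
    ContinuousLinearMap.intervalIntegral_apply
      (hf'.intervalIntegrable_of_verticalSegment_subset hp)]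
  rfl

lemma continuousOn_verticalPrimitive (hV : IsOpen V) (hf : ContinuousOn f V) :
    ContinuousOn (verticalPrimitive f) {p | verticalSegment p ⊆ V} :=
  fun _ hp => (continuousAt_verticalPrimitive hV hf hp).continuousWithinAt

lemma contDiffOn_verticalPrimitive_succ {n : ℕ} (hV : IsOpen V) (hf : ContDiffOn ℝ (n + 1) f V)
    (hf' : ContDiffOn ℝ n (verticalPrimitive (horizontalFDeriv f)) {p | verticalSegment p ⊆ V}) :
    ContDiffOn ℝ (n + 1) (verticalPrimitive f) {p | verticalSegment p ⊆ V} := by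
  have hf1 : ContDiffOn ℝ 1 f V := hf.of_le le_add_self
  rw [contDiffOn_succ_iff_fderiv_of_isOpen (isOpen_setOf_verticalSegment_subset hV)]
  refine ⟨fun p hp =>
    (hasFDerivAt_verticalPrimitive hV hf1 hp).differentiableAt.differentiableWithinAt, by simp, ?_⟩
  exact ((hf'.clm_comp contDiffOn_const).add (contDiffOn_const.smulRight
    ((hf.of_le le_self_add).mono fun p hp => hp (self_mem_verticalSegment p)))).congr
    fun p hp => (hasFDerivAt_verticalPrimitive hV hf1 hp).fderiv

lemma contDiffOn_verticalPrimitive_two (hV : IsOpen V) (hf : ContDiffOn ℝ 2 f V) :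
    ContDiffOn ℝ 2 (verticalPrimitive f) {p | verticalSegment p ⊆ V} := by
  have hf' : ContDiffOn ℝ (0 + 1) (horizontalFDeriv f) V :=
    contDiffOn_horizontalFDeriv hV hf (by norm_num)
  have hf'' : ContDiffOn ℝ 0 (verticalPrimitive (horizontalFDeriv (horizontalFDeriv f)))
      {p | verticalSegment p ⊆ V} :=
    contDiffOn_zero.2 (continuousOn_verticalPrimitive hV
      (contDiffOn_horizontalFDeriv hV hf' le_rfl).continuousOn)
  exact contDiffOn_verticalPrimitive_succ (n := 1) hV hf
    (contDiffOn_verticalPrimitive_succ hV hf' hf'')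

lemma fderiv_fderiv_verticalPrimitive_of_snd_eq_zero (hV : IsOpen V)
    (hf : ContDiffOn ℝ 2 f V) (hp : verticalSegment p ⊆ V) {w : E × ℝ} (hw : w.2 = 0) :
    fderiv ℝ (fun q => fderiv ℝ (verticalPrimitive f) q w) p w =
      verticalPrimitive (fun z => fderiv ℝ (fun z' => fderiv ℝ f z' w) z w) p := by
  have hw' : (w.1, (0 : ℝ)) = w := Prod.ext rfl hw.symm
  have hf1 : ContDiffOn ℝ 1 f V := hf.of_le one_le_two
  have hfw : ContDiffOn ℝ 1 (fun z => fderiv ℝ f z w) V :=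
    (hf.fderiv_of_isOpen hV (by norm_num)).clm_apply contDiffOn_const
  have heq : (fun q => fderiv ℝ (verticalPrimitive f) q w) =ᶠ[𝓝 p]
      verticalPrimitive (fun z => fderiv ℝ f z w) := by
    filter_upwards [(isOpen_setOf_verticalSegment_subset hV).mem_nhds hp] with q hq
    rw [fderiv_verticalPrimitive_apply hV hf1 hq, hw', hw, zero_smul, add_zero]
  rw [heq.fderiv_eq, fderiv_verticalPrimitive_apply hV hfw hp, hw', hw, zero_smul, add_zero]

lemma fderiv_fderiv_verticalPrimitive_zero_one (hV : IsOpen V)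
    (hf : ContDiffOn ℝ 1 f V) (hp : verticalSegment p ⊆ V) :
    fderiv ℝ (fun q => fderiv ℝ (verticalPrimitive f) q (0, 1)) p = fderiv ℝ f p := by
  refine Filter.EventuallyEq.fderiv_eq ?_
  filter_upwards [(isOpen_setOf_verticalSegment_subset hV).mem_nhds hp] with q hq
  simp [fderiv_verticalPrimitive_apply hV hf hq, verticalPrimitive, Prod.mk_zero_zero]

lemma verticalPrimitive_fderiv_zero_one (hV : IsOpen V)
    (hf : ContDiffOn ℝ 1 f V) (hp : verticalSegment p ⊆ V) :
    verticalPrimitive (fun z => fderiv ℝ f z (0, 1)) p = f p - f (p.1, 0) := by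
  refine integral_eq_sub_of_hasDerivAt (f := fun t => f (p.1, t)) (fun t ht => ?_)
    (((hf.continuousOn_fderiv_of_isOpen hV le_rfl).clm_apply
      continuousOn_const).intervalIntegrable_of_verticalSegment_subset hp)
  have hpt := hV.mem_nhds (hp (mk_mem_verticalSegment ht))
  exact ((hf.differentiableOn one_ne_zero).differentiableAt hpt).hasFDerivAt.comp_hasDerivAt t
    ((hasDerivAt_const t p.1).prodMk (hasDerivAt_id t))

end Primitive

lemma cylLap_verticalPrimitive {m : ℕ} {u : Cyl m → ℝ} {U : Set (Cyl m)} (hU : IsOpen U)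
    (hu : ContDiffOn ℝ 2 u U) {p : Cyl m} (hp : verticalSegment p ⊆ U)
    (hu0 : fderiv ℝ u (p.1, 0) (0, 1) = 0) :
    cylLap (verticalPrimitive u) p = verticalPrimitive (cylLap u) p := by
  have huw : ∀ w, ContDiffOn ℝ 1 (fun z => fderiv ℝ u z w) U :=
    fun w => (hu.fderiv_of_isOpen hU (by norm_num)).clm_apply contDiffOn_const
  have hint : ∀ w w', IntervalIntegrable
      (fun t => fderiv ℝ (fun z => fderiv ℝ u z w) (p.1, t) w') volume 0 p.2 :=
    fun w w' => (((huw w).continuousOn_fderiv_of_isOpen hU le_rfl).clm_apply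
      continuousOn_const).intervalIntegrable_of_verticalSegment_subset hp
  have hvert : fderiv ℝ u p (0, 1) =
      verticalPrimitive (fun z => fderiv ℝ (fun z' => fderiv ℝ u z' (0, 1)) z (0, 1)) p := by
    rw [verticalPrimitive_fderiv_zero_one hU (huw _) hp, hu0, sub_zero]
  simp only [cylLap]
  rw [fderiv_fderiv_verticalPrimitive_zero_one hU (hu.of_le one_le_two) hp, hvert,
    Finset.sum_congr rfl fun i _ => fderiv_fderiv_verticalPrimitive_of_snd_eq_zero hU hu hp rfl]
  simp only [verticalPrimitive, cylLap]
  rw [integral_add ?_ (hint _ _), integral_finsetSum fun i _ => hint _ _]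
  simpa only [Finset.sum_fn] using
    IntervalIntegrable.sum Finset.univ fun i _ =>
      hint (EuclideanSpace.single i 1, 0) (EuclideanSpace.single i 1, 0)

theorem commutativity_cylinder_general {n : ℕ}
    (D : Set (EuclideanSpace ℝ (Fin (n - 1))))
    {ℓ : ℝ} (u : Cyl (n - 1) → ℝ)
    (hu : IsC2OnClosure u (D ×ˢ Ioo (0 : ℝ) ℓ))
    (huy : ∀ x ∈ D, fderiv ℝ u (x, (0 : ℝ)) ((0 : EuclideanSpace ℝ (Fin (n - 1))), (1 : ℝ)) = 0) :
    ContDiffOn ℝ 2 (fun p : Cyl (n - 1) => ∫ t in (0 : ℝ)..p.2, u (p.1, t))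
        (D ×ˢ Ioo (0 : ℝ) ℓ) ∧
      ∀ p ∈ D ×ˢ Ioo (0 : ℝ) ℓ,
        cylLap (fun q : Cyl (n - 1) => ∫ t in (0 : ℝ)..q.2, u (q.1, t)) p =
          ∫ t in (0 : ℝ)..p.2, cylLap u (p.1, t) := by
  obtain ⟨U, hU, hclosure, hu⟩ := hu
  have hsub : D ×ˢ Ioo 0 ℓ ⊆ {p | verticalSegment p ⊆ U} :=
    fun p hp => (verticalSegment_subset_closure hp).trans hclosure
  exact ⟨(contDiffOn_verticalPrimitive_two hU hu).mono hsub,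
    fun p hp => cylLap_verticalPrimitive hU hu (hsub hp) (huy p.1 hp.1)⟩

/-- **Commutativity**: if `u` is C² on the closed cylinder and `u_y(x,0) = 0`, then
`Ju(x,y) = ∫₀ʸ u(x,t) dt` is C² on the open cylinder and `Δ(Ju)(x,y) = ∫₀ʸ Δu(x,t) dt`. -/
theorem commutativity_cylinder {n : ℕ} (hn : 2 ≤ n)
    (D : Set (EuclideanSpace ℝ (Fin (n - 1)))) (hD : IsOpen D) (hDb : IsBounded D)
    {ℓ : ℝ} (hℓ : 0 < ℓ) (u : Cyl (n - 1) → ℝ)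
    (hu : IsC2OnClosure u (D ×ˢ Ioo (0 : ℝ) ℓ))
    (huy : ∀ x ∈ D, fderiv ℝ u (x, (0 : ℝ)) ((0 : EuclideanSpace ℝ (Fin (n - 1))), (1 : ℝ)) = 0) :
    ContDiffOn ℝ 2 (fun p : Cyl (n - 1) => ∫ t in (0 : ℝ)..p.2, u (p.1, t))
        (D ×ˢ Ioo (0 : ℝ) ℓ) ∧
      ∀ p ∈ D ×ˢ Ioo (0 : ℝ) ℓ,
        cylLap (fun q : Cyl (n - 1) => ∫ t in (0 : ℝ)..q.2, u (q.1, t)) p =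
          ∫ t in (0 : ℝ)..p.2, cylLap u (p.1, t) :=
  commutativity_cylinder_general D u hu huy
end
end

section
/- Let n ≥ 2, let D ⊆ ℝ^{n−1} be a bounded open set, ℓ > 0, and Ω = D × (0,ℓ). Suppose u and v are C² on Ω̄, that f and g are continuous on Ω̄ with −Δu = f and −Δv = g at every point of Ω, that u_y(x,0) = u_y(x,ℓ) = v_y(x,0) = v_y(x,ℓ) = 0 for every x ∈ D, and that ∫₀^ℓ f(x,t) dt = ∫₀^ℓ g(x,t) dt for every x ∈ D. Then the function ψ : D → ℝ defined by ψ(x) = ∫₀^ℓ (u(x,t) − v(x,t)) dt is harmonic in D: ψ is twice continuously differentiable on D and Δψ(x) = 0 for every x ∈ D. -/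
open MeasureTheory Set Bornology

noncomputable section

/-!
Differentiating twice under the integral sign, `Δ ∫₀^ℓ u(·,t) dt = ∫₀^ℓ Δ_x u(·,t) dt`, where
`Δ_x` is the Laplacian in `x` alone. Since `Δ_x = Δ - ∂²_y` and
`∫₀^ℓ ∂²_y u(x,t) dt = u_y(x,ℓ) - u_y(x,0)` vanishes by the Neumann condition,
`Δ ∫₀^ℓ u(·,t) dt = ∫₀^ℓ Δu(·,t) dt = -∫₀^ℓ f(·,t) dt`. The same holds for `v` and `g`, and the
two right-hand sides agree by hypothesis.
-/

open Filter
open scoped Interval Topology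

section ParametricIntervalIntegral

variable {E G : Type*} [NormedAddCommGroup E] [NormedAddCommGroup G] {U : Set (E × ℝ)}
  {F : E × ℝ → G} {a b : ℝ} {x₀ : E}

lemma ContinuousOn.intervalIntegrable_slice (hF : ContinuousOn F U)
    (hx₀ : ∀ t ∈ [[a, b]], (x₀, t) ∈ U) :
    IntervalIntegrable (fun t => F (x₀, t)) volume a b :=
  (hF.comp (by fun_prop) hx₀).intervalIntegrable

lemma eventually_forall_uIcc_mem (hU : IsOpen U) (hx₀ : ∀ t ∈ [[a, b]], (x₀, t) ∈ U) :
    ∀ᶠ x in 𝓝 x₀, ∀ t ∈ [[a, b]], (x, t) ∈ U :=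
  isCompact_uIcc.eventually_forall_of_forall_eventually fun t ht => hU.mem_nhds (hx₀ t ht)

lemma exists_eventually_forall_uIcc_mem_and_norm_le (hU : IsOpen U) (hF : ContinuousOn F U)
    (hx₀ : ∀ t ∈ [[a, b]], (x₀, t) ∈ U) :
    ∃ C, ∀ᶠ x in 𝓝 x₀, ∀ t ∈ [[a, b]], (x, t) ∈ U ∧ ‖F (x, t)‖ ≤ C := by
  obtain ⟨C, hC⟩ := isCompact_uIcc.exists_bound_of_continuousOn (hF.comp (by fun_prop) hx₀)
  refine ⟨C + 1, isCompact_uIcc.eventually_forall_of_forall_eventually fun t ht => ?_⟩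
  have hFt : ContinuousAt F (x₀, t) := hF.continuousAt (hU.mem_nhds (hx₀ t ht))
  filter_upwards [hU.mem_nhds (hx₀ t ht),
    hFt.norm.eventually (gt_mem_nhds (lt_add_one ‖F (x₀, t)‖))] with p hpU hpF
  have hCt : ‖F (x₀, t)‖ ≤ C := hC t ht
  exact ⟨hpU, hpF.le.trans (by linarith)⟩

variable [NormedSpace ℝ G]

lemma continuousAt_intervalIntegral_slice (hU : IsOpen U) (hF : ContinuousOn F U)
    (hx₀ : ∀ t ∈ [[a, b]], (x₀, t) ∈ U) :
    ContinuousAt (fun x => ∫ t in a..b, F (x, t)) x₀ := by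
  obtain ⟨C, hC⟩ := exists_eventually_forall_uIcc_mem_and_norm_le hU hF hx₀
  refine intervalIntegral.continuousAt_of_dominated_interval (bound := fun _ => C) ?_ ?_
    intervalIntegrable_const ?_
  · filter_upwards [hC] with x hx
    exact (hF.intervalIntegrable_slice fun t ht => (hx t ht).1).def'.aestronglyMeasurable
  · filter_upwards [hC] with x hx
    exact ae_of_all _ fun t ht => (hx t (uIoc_subset_uIcc ht)).2
  · refine ae_of_all _ fun t ht => ?_
    exact (hF.continuousAt (hU.mem_nhds (hx₀ t (uIoc_subset_uIcc ht)))).comp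
      (f := fun x => (x, t)) (by fun_prop)

variable [NormedSpace ℝ E]

lemma ContDiffOn.continuousOn_fderiv_comp_inl (hF : ContDiffOn ℝ 1 F U) (hU : IsOpen U) :
    ContinuousOn (fun p => (fderiv ℝ F p).comp (ContinuousLinearMap.inl ℝ E ℝ)) U :=
  (hF.continuousOn_fderiv_of_isOpen hU le_rfl).clm_comp continuousOn_const

lemma hasFDerivAt_intervalIntegral_slice (hU : IsOpen U) (hF : ContDiffOn ℝ 1 F U)
    (hx₀ : ∀ t ∈ [[a, b]], (x₀, t) ∈ U) :
    HasFDerivAt (fun x => ∫ t in a..b, F (x, t))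
      (∫ t in a..b, (fderiv ℝ F (x₀, t)).comp (ContinuousLinearMap.inl ℝ E ℝ)) x₀ := by
  have hF' := hF.continuousOn_fderiv_comp_inl hU
  obtain ⟨C, hC⟩ := exists_eventually_forall_uIcc_mem_and_norm_le hU hF' hx₀
  obtain ⟨s, hs, hsC⟩ := hC.exists_mem
  refine intervalIntegral.hasFDerivAt_integral_of_dominated_of_fderiv_le
    (F := fun x t => F (x, t))
    (F' := fun x t => (fderiv ℝ F (x, t)).comp (ContinuousLinearMap.inl ℝ E ℝ))
    (bound := fun _ => C) hs ?_ (hF.continuousOn.intervalIntegrable_slice hx₀)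
    (hF'.intervalIntegrable_slice hx₀).def'.aestronglyMeasurable ?_ intervalIntegrable_const ?_
  · filter_upwards [hs] with x hx
    exact (hF.continuousOn.intervalIntegrable_slice fun t ht =>
      (hsC x hx t ht).1).def'.aestronglyMeasurable
  · exact ae_of_all _ fun t ht x hx => (hsC x hx t (uIoc_subset_uIcc ht)).2
  · refine ae_of_all _ fun t ht x hx => ?_
    have hxt := (hsC x hx t (uIoc_subset_uIcc ht)).1
    exact ((hF.differentiableOn one_ne_zero).differentiableAt (hU.mem_nhds hxt)).hasFDerivAt
      |>.comp x (hasFDerivAt_prodMk_left x t)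

lemma fderiv_intervalIntegral_slice_apply (hU : IsOpen U) (hF : ContDiffOn ℝ 1 F U)
    (hx₀ : ∀ t ∈ [[a, b]], (x₀, t) ∈ U) (e : E) :
    fderiv ℝ (fun x => ∫ t in a..b, F (x, t)) x₀ e = ∫ t in a..b, fderiv ℝ F (x₀, t) (e, 0) := by
  rw [(hasFDerivAt_intervalIntegral_slice hU hF hx₀).fderiv,
    ContinuousLinearMap.intervalIntegral_apply
      ((hF.continuousOn_fderiv_comp_inl hU).intervalIntegrable_slice hx₀)]
  rfl

lemma fderiv_fderiv_intervalIntegral_slice_apply (hU : IsOpen U) (hF : ContDiffOn ℝ 2 F U)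
    (hx₀ : ∀ t ∈ [[a, b]], (x₀, t) ∈ U) (e e' : E) :
    fderiv ℝ (fun x => fderiv ℝ (fun y => ∫ t in a..b, F (y, t)) x e) x₀ e' =
      ∫ t in a..b, fderiv ℝ (fun p => fderiv ℝ F p (e, 0)) (x₀, t) (e', 0) := by
  have hFe : ContDiffOn ℝ 1 (fun p => fderiv ℝ F p (e, 0)) U :=
    (hF.fderiv_of_isOpen hU le_rfl).clm_apply contDiffOn_const
  have hfderiv : (fun x => fderiv ℝ (fun y => ∫ t in a..b, F (y, t)) x e) =ᶠ[𝓝 x₀]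
      fun x => ∫ t in a..b, fderiv ℝ F (x, t) (e, 0) :=
    (eventually_forall_uIcc_mem hU hx₀).mono fun x hx =>
      fderiv_intervalIntegral_slice_apply hU (hF.of_le one_le_two) hx e
  rw [hfderiv.fderiv_eq]
  exact fderiv_intervalIntegral_slice_apply hU hFe hx₀ e'

lemma integral_fderiv_slice_apply_zero_one [CompleteSpace G] (hU : IsOpen U)
    (hF : ContDiffOn ℝ 1 F U) (hx₀ : ∀ t ∈ [[a, b]], (x₀, t) ∈ U) :
    ∫ t in a..b, fderiv ℝ F (x₀, t) (0, 1) = F (x₀, b) - F (x₀, a) := by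
  refine intervalIntegral.integral_eq_sub_of_hasDerivAt (f := fun t => F (x₀, t))
    (fun t ht => ?_) (((hF.continuousOn_fderiv_of_isOpen hU le_rfl).clm_apply
      continuousOn_const).intervalIntegrable_slice hx₀)
  exact ((hF.differentiableOn one_ne_zero).differentiableAt (hU.mem_nhds (hx₀ t ht))).hasFDerivAt
    |>.comp_hasDerivAt t ((hasDerivAt_const t x₀).prodMk (hasDerivAt_id t))

end ParametricIntervalIntegral

-- One universe for `E` and `G`: the induction passes from `G` to `E →L[ℝ] G`.
universe u in
theorem contDiffOn_intervalIntegral_slice {E G : Type u} [NormedAddCommGroup E]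
    [NormedSpace ℝ E] [NormedAddCommGroup G] [NormedSpace ℝ G] {U : Set (E × ℝ)}
    {F : E × ℝ → G} {a b : ℝ} {n : ℕ} (hU : IsOpen U) (hF : ContDiffOn ℝ n F U) {D : Set E}
    (hD : IsOpen D) (hDU : ∀ x ∈ D, ∀ t ∈ [[a, b]], (x, t) ∈ U) :
    ContDiffOn ℝ n (fun x => ∫ t in a..b, F (x, t)) D := by
  induction n generalizing G with
  | zero =>
    exact contDiffOn_zero.2 fun x hx =>
      (continuousAt_intervalIntegral_slice hU hF.continuousOn (hDU x hx)).continuousWithinAt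
  | succ n ih =>
    have hderiv := fun x hx =>
      hasFDerivAt_intervalIntegral_slice hU (hF.of_le (by exact_mod_cast le_add_self)) (hDU x hx)
    rw [Nat.cast_succ, contDiffOn_succ_iff_fderiv_of_isOpen hD]
    refine ⟨fun x hx => (hderiv x hx).differentiableAt.differentiableWithinAt, by simp, ?_⟩
    push_cast at hF
    exact (ih ((hF.fderiv_of_isOpen hU le_rfl).clm_comp contDiffOn_const)).congr fun x hx =>
      (hderiv x hx).fderiv

section Laplacian

variable {m : ℕ} {x : EuclideanSpace ℝ (Fin m)}

lemma Filter.EventuallyEq.lapD_eq {φ χ : EuclideanSpace ℝ (Fin m) → ℝ} (h : φ =ᶠ[𝓝 x] χ) :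
    lapD φ x = lapD χ x := by
  refine Finset.sum_congr rfl fun i _ => ?_
  have h' : (fun y => fderiv ℝ φ y (EuclideanSpace.single i 1)) =ᶠ[𝓝 x]
      fun y => fderiv ℝ χ y (EuclideanSpace.single i 1) := by
    filter_upwards [h.fderiv (𝕜 := ℝ)] with y hy
    rw [hy]
  rw [h'.fderiv_eq]

lemma lapD_sub {φ χ : EuclideanSpace ℝ (Fin m) → ℝ} (hφ : ContDiffAt ℝ 2 φ x)
    (hχ : ContDiffAt ℝ 2 χ x) : lapD (fun y => φ y - χ y) x = lapD φ x - lapD χ x := by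
  unfold lapD
  rw [← Finset.sum_sub_distrib]
  refine Finset.sum_congr rfl fun i _ => ?_
  have hdiff : ∀ ψ : EuclideanSpace ℝ (Fin m) → ℝ, ContDiffAt ℝ 2 ψ x →
      DifferentiableAt ℝ (fun y => fderiv ℝ ψ y (EuclideanSpace.single i 1)) x := fun ψ hψ =>
    ((hψ.fderiv_right (m := 1) le_rfl).differentiableAt one_ne_zero).clm_apply
      (differentiableAt_const _)
  have hsub : (fun y => fderiv ℝ (fun y => φ y - χ y) y (EuclideanSpace.single i 1)) =ᶠ[𝓝 x]
      fun y => fderiv ℝ φ y (EuclideanSpace.single i 1) -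
        fderiv ℝ χ y (EuclideanSpace.single i 1) := by
    filter_upwards [hφ.eventually (by simp), hχ.eventually (by simp)] with y hφy hχy
    rw [fderiv_fun_sub (hφy.differentiableAt two_ne_zero) (hχy.differentiableAt two_ne_zero)]
    rfl
  rw [hsub.fderiv_eq, fderiv_fun_sub (hdiff φ hφ) (hdiff χ hχ)]
  rfl

variable {U : Set (Cyl m)} {w : Cyl m → ℝ} {a b : ℝ}

theorem lapD_intervalIntegral_slice (hU : IsOpen U) (hw : ContDiffOn ℝ 2 w U)
    (hx : ∀ t ∈ [[a, b]], (x, t) ∈ U) :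
    lapD (fun y => ∫ t in a..b, w (y, t)) x =
      (∫ t in a..b, cylLap w (x, t)) - (fderiv ℝ w (x, b) (0, 1) - fderiv ℝ w (x, a) (0, 1)) := by
  have hw' : ∀ e, ContDiffOn ℝ 1 (fun p => fderiv ℝ w p e) U := fun e =>
    (hw.fderiv_of_isOpen hU le_rfl).clm_apply contDiffOn_const
  have hint : ∀ e e', IntervalIntegrable
      (fun t => fderiv ℝ (fun p => fderiv ℝ w p e) (x, t) e') volume a b := fun e e' =>
    (((hw' e).continuousOn_fderiv_of_isOpen hU le_rfl).clm_apply
      continuousOn_const).intervalIntegrable_slice hx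
  have hsum : IntervalIntegrable (fun t => ∑ i : Fin m, fderiv ℝ
      (fun p => fderiv ℝ w p (EuclideanSpace.single i 1, 0)) (x, t) (EuclideanSpace.single i 1, 0))
      volume a b := by
    simpa only [Finset.sum_fn] using IntervalIntegrable.sum Finset.univ fun i _ => hint _ _
  unfold cylLap
  rw [intervalIntegral.integral_add hsum (hint _ _),
    intervalIntegral.integral_finsetSum fun i _ => hint _ _,
    integral_fderiv_slice_apply_zero_one hU (hw' _) hx, add_sub_cancel_right]
  exact Finset.sum_congr rfl fun i _ => fderiv_fderiv_intervalIntegral_slice_apply hU hw hx _ _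

theorem lapD_intervalIntegral_slice_of_neumann (hU : IsOpen U) (hw : ContDiffOn ℝ 2 w U)
    (hab : a ≤ b) (hx : ∀ t ∈ [[a, b]], (x, t) ∈ U) {f : ℝ → ℝ}
    (hpde : ∀ t ∈ Ioo a b, -cylLap w (x, t) = f t) (ha : fderiv ℝ w (x, a) (0, 1) = 0)
    (hb : fderiv ℝ w (x, b) (0, 1) = 0) :
    lapD (fun y => ∫ t in a..b, w (y, t)) x = -∫ t in a..b, f t := by
  rw [lapD_intervalIntegral_slice hU hw hx, ha, hb, sub_zero, sub_zero,
    ← intervalIntegral.integral_neg]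
  exact intervalIntegral.integral_congr_Ioo_of_le hab fun t ht => by rw [← hpde t ht, neg_neg]

end Laplacian

theorem psi_harmonic_cylinder_general {n : ℕ}
    (D : Set (EuclideanSpace ℝ (Fin (n - 1)))) (hD : IsOpen D)
    {ℓ : ℝ} (hℓ : 0 < ℓ) (u v f g : Cyl (n - 1) → ℝ)
    (hu : IsC2OnClosure u (D ×ˢ Ioo (0 : ℝ) ℓ)) (hv : IsC2OnClosure v (D ×ˢ Ioo (0 : ℝ) ℓ))
    (hupde : ∀ p ∈ D ×ˢ Ioo (0 : ℝ) ℓ, -cylLap u p = f p)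
    (hvpde : ∀ p ∈ D ×ˢ Ioo (0 : ℝ) ℓ, -cylLap v p = g p)
    (huy0 : ∀ x ∈ D,
      fderiv ℝ u (x, (0 : ℝ)) ((0 : EuclideanSpace ℝ (Fin (n - 1))), (1 : ℝ)) = 0)
    (huyℓ : ∀ x ∈ D,
      fderiv ℝ u (x, ℓ) ((0 : EuclideanSpace ℝ (Fin (n - 1))), (1 : ℝ)) = 0)
    (hvy0 : ∀ x ∈ D,
      fderiv ℝ v (x, (0 : ℝ)) ((0 : EuclideanSpace ℝ (Fin (n - 1))), (1 : ℝ)) = 0)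
    (hvyℓ : ∀ x ∈ D,
      fderiv ℝ v (x, ℓ) ((0 : EuclideanSpace ℝ (Fin (n - 1))), (1 : ℝ)) = 0)
    (hfg : ∀ x ∈ D, (∫ t in (0 : ℝ)..ℓ, f (x, t)) = ∫ t in (0 : ℝ)..ℓ, g (x, t)) :
    ContDiffOn ℝ 2
        (fun x : EuclideanSpace ℝ (Fin (n - 1)) => ∫ t in (0 : ℝ)..ℓ, (u (x, t) - v (x, t))) D ∧
      ∀ x ∈ D,
        lapD (fun y : EuclideanSpace ℝ (Fin (n - 1)) =>
          ∫ t in (0 : ℝ)..ℓ, (u (y, t) - v (y, t))) x = 0 := by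
  obtain ⟨Uu, hUu, hΩu, hu⟩ := hu
  obtain ⟨Uv, hUv, hΩv, hv⟩ := hv
  have hslice : ∀ {V}, closure (D ×ˢ Ioo (0 : ℝ) ℓ) ⊆ V →
      ∀ x ∈ D, ∀ t ∈ [[0, ℓ]], ((x, t) : Cyl (n - 1)) ∈ V := fun hV x hx t ht =>
    hV <| by
      rw [closure_prod_eq, closure_Ioo hℓ.ne]
      exact ⟨subset_closure hx, by simpa [hℓ.le] using ht⟩
  have hψu : ContDiffOn ℝ 2 (fun x => ∫ t in (0 : ℝ)..ℓ, u (x, t)) D :=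
    contDiffOn_intervalIntegral_slice (n := 2) hUu hu hD (hslice hΩu)
  have hψv : ContDiffOn ℝ 2 (fun x => ∫ t in (0 : ℝ)..ℓ, v (x, t)) D :=
    contDiffOn_intervalIntegral_slice (n := 2) hUv hv hD (hslice hΩv)
  have hψ : EqOn (fun x => ∫ t in (0 : ℝ)..ℓ, (u (x, t) - v (x, t)))
      (fun x => (∫ t in (0 : ℝ)..ℓ, u (x, t)) - ∫ t in (0 : ℝ)..ℓ, v (x, t)) D := fun x hx =>
    intervalIntegral.integral_sub (hu.continuousOn.intervalIntegrable_slice (hslice hΩu x hx))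
      (hv.continuousOn.intervalIntegrable_slice (hslice hΩv x hx))
  refine ⟨(hψu.sub hψv).congr hψ, fun x hx => ?_⟩
  rw [(eventuallyEq_of_mem (hD.mem_nhds hx) hψ).lapD_eq,
    lapD_sub (hψu.contDiffAt (hD.mem_nhds hx)) (hψv.contDiffAt (hD.mem_nhds hx)),
    lapD_intervalIntegral_slice_of_neumann hUu hu hℓ.le (hslice hΩu x hx)
      (fun t ht => hupde _ ⟨hx, ht⟩) (huy0 x hx) (huyℓ x hx),
    lapD_intervalIntegral_slice_of_neumann hUv hv hℓ.le (hslice hΩv x hx)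
      (fun t ht => hvpde _ ⟨hx, ht⟩) (hvy0 x hx) (hvyℓ x hx), hfg x hx, sub_self]

/-- If `-Δu = f`, `-Δv = g` on the cylinder with Neumann conditions on top and bottom and
`f`, `g` have equal means on every segment `{x} × (0,ℓ)`, then
`ψ(x) = ∫₀^ℓ (u(x,t) - v(x,t)) dt` is harmonic in `D`. -/
theorem psi_harmonic_cylinder {n : ℕ} (hn : 2 ≤ n)
    (D : Set (EuclideanSpace ℝ (Fin (n - 1)))) (hD : IsOpen D) (hDb : IsBounded D)
    {ℓ : ℝ} (hℓ : 0 < ℓ) (u v f g : Cyl (n - 1) → ℝ)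
    (hu : IsC2OnClosure u (D ×ˢ Ioo (0 : ℝ) ℓ)) (hv : IsC2OnClosure v (D ×ˢ Ioo (0 : ℝ) ℓ))
    (hf : ContinuousOn f (closure (D ×ˢ Ioo (0 : ℝ) ℓ)))
    (hg : ContinuousOn g (closure (D ×ˢ Ioo (0 : ℝ) ℓ)))
    (hupde : ∀ p ∈ D ×ˢ Ioo (0 : ℝ) ℓ, -cylLap u p = f p)
    (hvpde : ∀ p ∈ D ×ˢ Ioo (0 : ℝ) ℓ, -cylLap v p = g p)
    (huy0 : ∀ x ∈ D,
      fderiv ℝ u (x, (0 : ℝ)) ((0 : EuclideanSpace ℝ (Fin (n - 1))), (1 : ℝ)) = 0)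
    (huyℓ : ∀ x ∈ D,
      fderiv ℝ u (x, ℓ) ((0 : EuclideanSpace ℝ (Fin (n - 1))), (1 : ℝ)) = 0)
    (hvy0 : ∀ x ∈ D,
      fderiv ℝ v (x, (0 : ℝ)) ((0 : EuclideanSpace ℝ (Fin (n - 1))), (1 : ℝ)) = 0)
    (hvyℓ : ∀ x ∈ D,
      fderiv ℝ v (x, ℓ) ((0 : EuclideanSpace ℝ (Fin (n - 1))), (1 : ℝ)) = 0)
    (hfg : ∀ x ∈ D, (∫ t in (0 : ℝ)..ℓ, f (x, t)) = ∫ t in (0 : ℝ)..ℓ, g (x, t)) :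
    ContDiffOn ℝ 2
        (fun x : EuclideanSpace ℝ (Fin (n - 1)) => ∫ t in (0 : ℝ)..ℓ, (u (x, t) - v (x, t))) D ∧
      ∀ x ∈ D,
        lapD (fun y : EuclideanSpace ℝ (Fin (n - 1)) =>
          ∫ t in (0 : ℝ)..ℓ, (u (y, t) - v (y, t))) x = 0 :=
  psi_harmonic_cylinder_general D hD hℓ u v f g hu hv hupde hvpde huy0 huyℓ hvy0 hvyℓ hfg
end
end
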